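/- arXiv:1701.08929 — 7 statements merged into one kernel-verified Lean document; each statement's English description precedes it below -/
import Mathlib

section
/- For all real-valued f ∈ C_0^∞(ℝⁿ \ {0}) with n ≥ 3, and all α ∈ ℝ, one has ∫_{ℝⁿ} |∇f(x)|² dⁿx ≥ α((n-2)-α) ∫_{ℝⁿ} |x|^{-2} |f(x)|² dⁿx. -/
open MeasureTheory Set

local notation "⟪" x ", " y "⟫" => @inner ℝ _ _ x y


set_option maxHeartbeats 1000000 in
lemma pi_integral_fderiv_single (m : ℕ) (g : (Fin (m+1) → ℝ) → ℝ)
    (hg : ContDiff ℝ (⊤ : ℕ∞) g) (hcg : HasCompactSupport g) (i : Fin (m+1)) :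
    ∫ x, fderiv ℝ g x (Pi.single i 1) = 0 := by
  obtain ⟨R, hR⟩ := hcg.isBounded.subset_closedBall 0
  have hsupp : tsupport g ⊆ Metric.closedBall 0 (|R|) :=
    hR.trans (Metric.closedBall_subset_closedBall (le_abs_self R))
  have hzero : ∀ y : Fin (m+1) → ℝ, ¬ ‖y‖ ≤ |R| → g y = 0 := fun y hy =>
    image_eq_zero_of_notMem_tsupport (fun h => hy (by simpa using hsupp h))
  have hzero' : ∀ y : Fin (m+1) → ℝ, ¬ ‖y‖ ≤ |R| → fderiv ℝ g y = 0 := fun y hy =>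
    image_eq_zero_of_notMem_tsupport
      (fun h => hy (by simpa using hsupp (tsupport_fderiv_subset ℝ h)))
  set R' : ℝ := |R| + 1 with hR'
  have hR'pos : |R| < R' := by simp [hR']
  have hR'nonneg : (0:ℝ) ≤ R' := by positivity
  set a : Fin (m+1) → ℝ := fun _ => -R' with ha
  set b : Fin (m+1) → ℝ := fun _ => R' with hb
  have hle : a ≤ b := fun j => by simp only [a, b]; linarith
  have hcont : Continuous fun x => fderiv ℝ g x (Pi.single i 1) :=
    (hg.continuous_fderiv (by simp)).clm_apply continuous_const
  have hins : ∀ (j : Fin (m+1)) (c : ℝ), |c| = R' → ∀ x : Fin m → ℝ,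
      g (Fin.insertNth j c x) = 0 := by
    intro j c hc x
    apply hzero
    intro hle2
    have h2 := (norm_le_pi_norm (Fin.insertNth j c x : Fin (m+1) → ℝ) j).trans hle2
    rw [Fin.insertNth_apply_same] at h2
    rw [Real.norm_eq_abs, hc] at h2
    linarith
  have key := integral_divergence_of_hasFDerivAt_off_countable' a b hle
    (fun j x => if j = i then g x else 0)
    (fun j x => if j = i then fderiv ℝ g x else 0)
    ∅ Set.countable_empty
    (fun j => by
      by_cases h : j = i <;> simp [h, hg.continuous.continuousOn, continuousOn_const])
    (fun x _ j => by
      by_cases h : j = i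
      · simpa [h] using (hg.differentiable (by simp) x).hasFDerivAt
      · simpa [h] using hasFDerivAt_const (0:ℝ) x)
    (by
      have : (fun x => ∑ j, (if j = i then fderiv ℝ g x else 0) (Pi.single j 1))
          = fun x => fderiv ℝ g x (Pi.single i 1) := by
        funext x
        rw [Finset.sum_eq_single i (fun j _ hj => by rw [if_neg hj]; rfl)
          (fun h => absurd (Finset.mem_univ i) h), if_pos rfl]
      rw [this]
      exact hcont.continuousOn.integrableOn_compact isCompact_Icc)
  have hsum : (fun x => ∑ j, (if j = i then fderiv ℝ g x else 0) (Pi.single j 1))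
      = fun x => fderiv ℝ g x (Pi.single i 1) := by
    funext x
    rw [Finset.sum_eq_single i (fun j _ hj => by rw [if_neg hj]; rfl)
      (fun h => absurd (Finset.mem_univ i) h), if_pos rfl]
  rw [hsum] at key
  have habsb : |R'| = R' := abs_of_nonneg hR'nonneg
  have habsa : |(-R')| = R' := by rw [abs_neg]; exact habsb
  have hrhs : ∀ j : Fin (m+1),
      ((∫ x in Icc (a ∘ Fin.succAbove j) (b ∘ Fin.succAbove j),
        (fun j x => if j = i then g x else 0) j (Fin.insertNth j (b j) x)) -
       ∫ x in Icc (a ∘ Fin.succAbove j) (b ∘ Fin.succAbove j),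
        (fun j x => if j = i then g x else 0) j (Fin.insertNth j (a j) x)) = 0 := by
    intro j
    have e1 : ∀ x : Fin m → ℝ,
        (fun j x => if j = i then g x else 0) j (Fin.insertNth j (b j) x) = 0 := by
      intro x
      by_cases h : j = i
      · subst h; simpa using hins j R' habsb x
      · simp [h]
    have e2 : ∀ x : Fin m → ℝ,
        (fun j x => if j = i then g x else 0) j (Fin.insertNth j (a j) x) = 0 := by
      intro x
      by_cases h : j = i
      · subst h; simpa using hins j (-R') habsa x
      · simp [h]
    rw [setIntegral_congr_fun measurableSet_Icc (fun x _ => e1 x),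
        setIntegral_congr_fun measurableSet_Icc (fun x _ => e2 x),
        integral_zero, sub_self]
  rw [Finset.sum_congr rfl (fun j _ => hrhs j), Finset.sum_const_zero] at key
  rw [← key]
  symm
  apply setIntegral_eq_integral_of_forall_compl_eq_zero
  intro x hx
  have hxnorm : ¬ ‖x‖ ≤ |R| := by
    intro hle2
    apply hx
    rw [Set.mem_Icc]
    constructor <;> intro j <;>
      [skip; skip] <;>
      · have h3 := (norm_le_pi_norm x j).trans hle2
        rw [Real.norm_eq_abs, abs_le] at h3
        simp only [a, b]
        linarith [h3.1, h3.2]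
  rw [hzero' x hxnorm]
  rfl

lemma euc_integral_fderiv_single {n : ℕ} (w : EuclideanSpace ℝ (Fin n) → ℝ)
    (hw : ContDiff ℝ (⊤ : ℕ∞) w) (hcw : HasCompactSupport w) (i : Fin n) :
    ∫ x, fderiv ℝ w x (EuclideanSpace.single i 1) = 0 := by
  cases n with
  | zero => exact absurd i.2 (by omega)
  | succ m =>
    set L : EuclideanSpace ℝ (Fin (m+1)) ≃L[ℝ] (Fin (m+1) → ℝ) :=
      (EuclideanSpace.equiv (Fin (m+1)) ℝ) with hL
    set g : (Fin (m+1) → ℝ) → ℝ := w ∘ L.symm with hg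
    have hgsmooth : ContDiff ℝ (⊤ : ℕ∞) g := hw.comp L.symm.contDiff
    have hgc : HasCompactSupport g := hcw.comp_homeomorph L.symm.toHomeomorph
    have hmp : MeasurePreserving (⇑(MeasurableEquiv.toLp 2 (Fin (m+1) → ℝ)).symm.symm)
        volume volume := (EuclideanSpace.volume_preserving_symm_measurableEquiv_toLp (Fin (m+1))).symm
    have hcomp : ∫ x, fderiv ℝ w x (EuclideanSpace.single i 1) =
        ∫ y : Fin (m+1) → ℝ, fderiv ℝ w
          ((MeasurableEquiv.toLp 2 (Fin (m+1) → ℝ)).symm.symm y)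
          (EuclideanSpace.single i 1) := by
      rw [← hmp.integral_comp (MeasurableEquiv.toLp 2 (Fin (m+1) → ℝ)).symm.symm.measurableEmbedding
        (fun x => fderiv ℝ w x (EuclideanSpace.single i 1))]
    rw [hcomp]
    have hpt : ∀ y : Fin (m+1) → ℝ,
        fderiv ℝ w ((MeasurableEquiv.toLp 2 (Fin (m+1) → ℝ)).symm.symm y)
          (EuclideanSpace.single i 1) = fderiv ℝ g y (Pi.single i 1) := by
      intro y
      have h1 : fderiv ℝ g y = (fderiv ℝ w (L.symm y)).comp (L.symm : _ →L[ℝ] _) := by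
        rw [hg]
        rw [fderiv_comp y (hw.differentiable (by simp) _) L.symm.differentiableAt, L.symm.fderiv]
      have h2 : (L.symm (Pi.single i 1) : EuclideanSpace ℝ (Fin (m+1)))
          = EuclideanSpace.single i 1 := rfl
      have h3 : ((MeasurableEquiv.toLp 2 (Fin (m+1) → ℝ)).symm.symm y
          : EuclideanSpace ℝ (Fin (m+1))) = L.symm y := rfl
      rw [h3, h1]
      simp only [ContinuousLinearMap.comp_apply, ContinuousLinearEquiv.coe_coe, h2]
    rw [integral_congr_ae (Filter.Eventually.of_forall hpt)]
    exact pi_integral_fderiv_single m g hgsmooth hgc i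



lemma fderivW_apply {n : ℕ} (f : EuclideanSpace ℝ (Fin n) → ℝ) (hf : ContDiff ℝ (⊤ : ℕ∞) f)
    {x : EuclideanSpace ℝ (Fin n)} (hx : x ≠ 0) (i : Fin n) (v : EuclideanSpace ℝ (Fin n)) :
    fderiv ℝ (fun y => f y ^ 2 * ((‖y‖ ^ 2)⁻¹ * y i)) x v =
      (2 * f x * fderiv ℝ f x v) * ((‖x‖ ^ 2)⁻¹ * x i)
      + f x ^ 2 * ((-((‖x‖ ^ 2) ^ 2)⁻¹ * (2 * ⟪x, v⟫)) * x i + (‖x‖ ^ 2)⁻¹ * v i) := by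
  have hns0 : ‖x‖ ^ 2 ≠ 0 := pow_ne_zero 2 (norm_ne_zero_iff.mpr hx)
  have hf' : HasFDerivAt f (fderiv ℝ f x) x := (hf.differentiable (by simp) x).hasFDerivAt
  have h1 : HasFDerivAt (fun y => f y ^ 2) ((2 * f x) • fderiv ℝ f x) x := by
    have h := hf'.mul hf'
    have he : (f * f) = fun y => f y ^ 2 := by funext y; simp only [Pi.mul_apply]; ring
    rw [he] at h
    refine h.congr_fderiv ?_
    ext v
    simp only [ContinuousLinearMap.smul_apply, ContinuousLinearMap.add_apply, smul_eq_mul]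
    ring
  have hns : HasFDerivAt (fun y : EuclideanSpace ℝ (Fin n) => ‖y‖ ^ 2)
      (2 • (innerSL ℝ x)) x := by
    simpa using (hasFDerivAt_id x).norm_sq
  have h2 : HasFDerivAt (fun y : EuclideanSpace ℝ (Fin n) => (‖y‖ ^ 2)⁻¹)
      ((ContinuousLinearMap.smulRight (1 : ℝ →L[ℝ] ℝ) (-((‖x‖ ^ 2) ^ 2)⁻¹)).comp
        (2 • (innerSL ℝ x))) x :=
    (hasFDerivAt_inv hns0).comp x hns
  have h3 : HasFDerivAt (fun y : EuclideanSpace ℝ (Fin n) => y i)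
      (EuclideanSpace.proj i : EuclideanSpace ℝ (Fin n) →L[ℝ] ℝ) x :=
    (EuclideanSpace.proj i : EuclideanSpace ℝ (Fin n) →L[ℝ] ℝ).hasFDerivAt
  have h23 := h2.mul h3
  have h := h1.mul h23
  rw [show (fun y : EuclideanSpace ℝ (Fin n) => f y ^ 2 * ((‖y‖ ^ 2)⁻¹ * y i)) = ((fun y => f y ^ 2) * ((fun y => (‖y‖ ^ 2)⁻¹) * fun y => y i)) from rfl, h.fderiv]
  simp only [ContinuousLinearMap.add_apply, ContinuousLinearMap.smul_apply,
    ContinuousLinearMap.comp_apply, ContinuousLinearMap.smulRight_apply,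
    ContinuousLinearMap.one_apply, innerSL_apply_apply, PiLp.proj_apply, Pi.mul_apply,
    smul_eq_mul]
  ring



lemma divW_eq {n : ℕ} (f : EuclideanSpace ℝ (Fin n) → ℝ) (hf : ContDiff ℝ (⊤ : ℕ∞) f)
    {x : EuclideanSpace ℝ (Fin n)} (hx : x ≠ 0) :
    ∑ i : Fin n, fderiv ℝ (fun y => f y ^ 2 * ((‖y‖ ^ 2)⁻¹ * y i)) x
        (EuclideanSpace.single i 1) =
      2 * f x * fderiv ℝ f x x * (‖x‖ ^ 2)⁻¹ + ((n : ℝ) - 2) * (f x ^ 2 * (‖x‖ ^ 2)⁻¹) := by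
  have hns0 : ‖x‖ ^ 2 ≠ 0 := pow_ne_zero 2 (norm_ne_zero_iff.mpr hx)
  have hsingle : ∀ i : Fin n, (EuclideanSpace.single i (1:ℝ)) i = 1 := by
    intro i; simp [EuclideanSpace.single_apply]
  have hinner : ∀ i : Fin n, ⟪x, EuclideanSpace.single i (1:ℝ)⟫ = x i := by
    intro i; simp [EuclideanSpace.inner_single_right]
  have hxdecomp : (∑ i : Fin n, x i • EuclideanSpace.single i (1:ℝ)) = x := by
    ext j
    rw [show (∑ i : Fin n, x i • EuclideanSpace.single i (1:ℝ)) j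
      = ∑ i : Fin n, (x i • EuclideanSpace.single i (1:ℝ)) j from
        by rw [WithLp.ofLp_sum]; exact Finset.sum_apply j Finset.univ _]
    simp [EuclideanSpace.single_apply]
  have hsum1 : ∑ i : Fin n, fderiv ℝ f x (EuclideanSpace.single i 1) * x i
      = fderiv ℝ f x x := by
    have h : fderiv ℝ f x x
        = fderiv ℝ f x (∑ i : Fin n, x i • EuclideanSpace.single i (1:ℝ)) := by
      rw [hxdecomp]
    rw [h, map_sum]
    exact Finset.sum_congr rfl fun i _ => by
      rw [ContinuousLinearMap.map_smul, smul_eq_mul, mul_comm]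
  have hsum2 : ∑ i : Fin n, x i * x i = ‖x‖ ^ 2 := by
    rw [← real_inner_self_eq_norm_sq]
    simp only [PiLp.inner_apply, RCLike.inner_apply, conj_trivial]
  have expand : ∀ i : Fin n, fderiv ℝ (fun y => f y ^ 2 * ((‖y‖ ^ 2)⁻¹ * y i)) x
      (EuclideanSpace.single i 1)
      = (2 * f x * (‖x‖ ^ 2)⁻¹) * (fderiv ℝ f x (EuclideanSpace.single i 1) * x i)
        + (f x ^ 2 * (-((‖x‖ ^ 2) ^ 2)⁻¹ * 2)) * (x i * x i)
        + f x ^ 2 * (‖x‖ ^ 2)⁻¹ := by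
    intro i
    rw [fderivW_apply f hf hx i (EuclideanSpace.single i 1), hinner i, hsingle i]
    ring
  rw [Finset.sum_congr rfl (fun i _ => expand i), Finset.sum_add_distrib,
    Finset.sum_add_distrib, ← Finset.mul_sum, ← Finset.mul_sum, hsum1, hsum2,
    Finset.sum_const, Finset.card_univ, Fintype.card_fin, nsmul_eq_mul]
  field_simp
  ring



noncomputable def lap {n : ℕ} (f : EuclideanSpace ℝ (Fin n) → ℝ)
    (x : EuclideanSpace ℝ (Fin n)) : ℝ :=
  ∑ i : Fin n, fderiv ℝ (fderiv ℝ f) x (EuclideanSpace.single i 1) (EuclideanSpace.single i 1)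

theorem stmt_0 (n : ℕ) (hn : 3 ≤ n) (α : ℝ)
    (f : EuclideanSpace ℝ (Fin n) → ℝ)
    (hf : ContDiff ℝ (⊤ : ℕ∞) f) (hc : HasCompactSupport f)
    (h0 : ∀ x ∈ tsupport f, x ≠ 0) :
    ∫ x, ‖gradient f x‖ ^ 2 ≥
      α * (((n : ℝ) - 2) - α) * ∫ x, (f x) ^ 2 / ‖x‖ ^ 2 := by
  classical
  set W : Fin n → EuclideanSpace ℝ (Fin n) → ℝ :=
    fun i y => f y ^ 2 * ((‖y‖ ^ 2)⁻¹ * y i) with hW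
  set D : EuclideanSpace ℝ (Fin n) → ℝ :=
    fun x => ∑ i : Fin n, fderiv ℝ (W i) x (EuclideanSpace.single i 1) with hD
  set B : EuclideanSpace ℝ (Fin n) → ℝ := fun x => f x ^ 2 / ‖x‖ ^ 2 with hB
  set A : EuclideanSpace ℝ (Fin n) → ℝ := fun x => ‖gradient f x‖ ^ 2 with hA
  set k : ℝ := α * ((n : ℝ) - 2) - α ^ 2 with hk
  -- basic vanishing facts off the support
  have hfzero : ∀ x ∉ tsupport f, f =ᶠ[nhds x] 0 := fun x hx =>
    Filter.eventuallyEq_iff_exists_mem.mpr ⟨(tsupport f)ᶜ,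
      (isClosed_tsupport f).isOpen_compl.mem_nhds hx,
      fun y hy => image_eq_zero_of_notMem_tsupport hy⟩
  have hfd0 : ∀ x ∉ tsupport f, fderiv ℝ f x = 0 := by
    intro x hx
    rw [(hfzero x hx).fderiv_eq]
    exact fderiv_const_apply 0
  have hgradzero : ∀ x ∉ tsupport f, gradient f x = 0 := by
    intro x hx
    show (InnerProductSpace.toDual ℝ _).symm (fderiv ℝ f x) = 0
    rw [hfd0 x hx]
    simp
  have hWev : ∀ (i : Fin n), ∀ x ∉ tsupport f, W i =ᶠ[nhds x] 0 := by
    intro i x hx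
    filter_upwards [hfzero x hx] with y hy
    simp only [Pi.zero_apply] at hy ⊢
    simp [hW, hy]
  have hWfd0 : ∀ (i : Fin n), ∀ x ∉ tsupport f, fderiv ℝ (W i) x = 0 := by
    intro i x hx
    rw [(hWev i x hx).fderiv_eq]
    exact fderiv_const_apply 0
  have hWsupp : ∀ i, Function.support (W i) ⊆ Function.support f := by
    intro i y hy
    simp only [Function.mem_support] at hy ⊢
    intro h
    exact hy (by simp [hW, h])
  have hWc : ∀ i, HasCompactSupport (W i) := fun i => hc.mono (hWsupp i)
  have hWsmooth : ∀ i, ContDiff ℝ (⊤ : ℕ∞) (W i) := by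
    intro i
    rw [contDiff_iff_contDiffAt]
    intro x
    by_cases hx : x ∈ tsupport f
    · have hx0 : x ≠ 0 := h0 x hx
      have hns0 : ‖x‖ ^ 2 ≠ 0 := pow_ne_zero 2 (norm_ne_zero_iff.mpr hx0)
      have h1 : ContDiffAt ℝ (⊤ : ℕ∞) (fun y : EuclideanSpace ℝ (Fin n) => f y ^ 2) x :=
        hf.contDiffAt.pow 2
      have h2 : ContDiffAt ℝ (⊤ : ℕ∞) (fun y : EuclideanSpace ℝ (Fin n) => (‖y‖ ^ 2)⁻¹) x :=
        (contDiff_norm_sq ℝ).contDiffAt.inv hns0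
      have h3 : ContDiffAt ℝ (⊤ : ℕ∞) (fun y : EuclideanSpace ℝ (Fin n) => y i) x :=
        (EuclideanSpace.proj i : EuclideanSpace ℝ (Fin n) →L[ℝ] ℝ).contDiff.contDiffAt
      exact h1.mul (h2.mul h3)
    · exact contDiffAt_const.congr_of_eventuallyEq (hWev i x hx)
  -- continuity and integrability
  have hgradcont : Continuous (gradient f) := by
    have h1 : Continuous (fderiv ℝ f) := hf.continuous_fderiv (by simp)
    exact (InnerProductSpace.toDual ℝ
      (EuclideanSpace ℝ (Fin n))).symm.continuous.comp h1
  have hAint : Integrable A := by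
    refine (hgradcont.norm.pow 2).integrable_of_hasCompactSupport ?_
    exact HasCompactSupport.intro hc (fun x hx => by
      show ‖gradient f x‖ ^ 2 = 0
      rw [hgradzero x hx]; simp)
  have hBint : Integrable B := by
    have hBcont : Continuous B := by
      rw [continuous_iff_continuousAt]
      intro x
      by_cases hx : x ∈ tsupport f
      · have hx0 : x ≠ 0 := h0 x hx
        have hns0 : ‖x‖ ^ 2 ≠ 0 := pow_ne_zero 2 (norm_ne_zero_iff.mpr hx0)
        exact ((hf.continuous.pow 2).continuousAt).div
          ((continuous_norm.pow 2).continuousAt) hns0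
      · have hev : B =ᶠ[nhds x] (fun _ => (0:ℝ)) := by
          filter_upwards [hfzero x hx] with y hy
          simp only [Pi.zero_apply] at hy
          simp [hB, hy]
        exact continuousAt_const.congr hev.symm
    refine hBcont.integrable_of_hasCompactSupport ?_
    exact HasCompactSupport.intro hc (fun x hx => by
      simp [hB, image_eq_zero_of_notMem_tsupport hx])
  have hDsummand : ∀ i : Fin n, Integrable
      (fun x => fderiv ℝ (W i) x (EuclideanSpace.single i 1)) := by
    intro i
    refine (((hWsmooth i).continuous_fderiv (by simp)).clm_apply
      continuous_const).integrable_of_hasCompactSupport ?_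
    exact HasCompactSupport.intro hc (fun x hx => by rw [hWfd0 i x hx]; rfl)
  have hDint : Integrable D := by
    rw [hD]
    exact integrable_finset_sum _ (fun i _ => hDsummand i)
  have hDzero : ∫ x, D x = 0 := by
    rw [hD]
    rw [integral_finset_sum _ (fun i _ => hDsummand i)]
    refine Finset.sum_eq_zero (fun i _ => ?_)
    exact euc_integral_fderiv_single (W i) (hWsmooth i) (hWc i) i
  -- pointwise identity
  have hpt : ∀ x, ‖gradient f x + ((α * f x) / ‖x‖ ^ 2) • x‖ ^ 2
      = A x + α * D x - k * B x := by
    intro x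
    by_cases hx : x ∈ tsupport f
    · have hx0 : x ≠ 0 := h0 x hx
      have hns0 : ‖x‖ ^ 2 ≠ 0 := pow_ne_zero 2 (norm_ne_zero_iff.mpr hx0)
      have hDx : D x = 2 * f x * fderiv ℝ f x x * (‖x‖ ^ 2)⁻¹
          + ((n : ℝ) - 2) * (f x ^ 2 * (‖x‖ ^ 2)⁻¹) := divW_eq f hf hx0
      have hinner : ⟪gradient f x, ((α * f x) / ‖x‖ ^ 2) • x⟫
          = ((α * f x) / ‖x‖ ^ 2) * fderiv ℝ f x x := by
        rw [real_inner_smul_right]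
        congr 1
        exact InnerProductSpace.toDual_symm_apply
      have hnsm : ‖((α * f x) / ‖x‖ ^ 2) • x‖ ^ 2
          = ((α * f x) / ‖x‖ ^ 2) ^ 2 * ‖x‖ ^ 2 := by
        rw [norm_smul, mul_pow, Real.norm_eq_abs, sq_abs]
      rw [norm_add_sq_real, hinner, hnsm, hDx]
      simp only [hA, hB, hk]
      field_simp
      ring
    · have h1 : gradient f x = 0 := hgradzero x hx
      have h2 : f x = 0 := image_eq_zero_of_notMem_tsupport hx
      have h3 : D x = 0 := by
        rw [hD]
        exact Finset.sum_eq_zero (fun i _ => by rw [hWfd0 i x hx]; rfl)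
      simp [hA, hB, h1, h2, h3]
  -- conclude
  have hPnn : 0 ≤ ∫ x, (A x + α * D x - k * B x) :=
    integral_nonneg (fun x => by rw [← hpt x]; positivity)
  have hsplit : ∫ x, (A x + α * D x - k * B x)
      = (∫ x, A x) + α * (∫ x, D x) - k * (∫ x, B x) := by
    have h1 : Integrable (fun x => A x + α * D x) volume :=
      hAint.add (hDint.const_mul α)
    have h2 : Integrable (fun x => k * B x) volume := hBint.const_mul k
    rw [integral_sub h1 h2, integral_add hAint (hDint.const_mul α),
      integral_const_mul, integral_const_mul]
  rw [hsplit, hDzero, mul_zero, add_zero] at hPnn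
  have hkeq : k = α * (((n : ℝ) - 2) - α) := by rw [hk]; ring
  calc α * (((n : ℝ) - 2) - α) * ∫ x, f x ^ 2 / ‖x‖ ^ 2
      = k * ∫ x, B x := by rw [hkeq, hB]
    _ ≤ ∫ x, A x := by linarith
    _ = ∫ x, ‖gradient f x‖ ^ 2 := by rw [hA]
end

section
/- For all f ∈ C_0^∞(ℝⁿ \ {0}) with n ≥ 3, one has the improved Hardy inequality ∫_{ℝⁿ} |x|^{-2} |x · ∇f(x)|² dⁿx ≥ ((n-2)/2)² ∫_{ℝⁿ} |x|^{-2} |f(x)|² dⁿx. -/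
open MeasureTheory

set_option maxHeartbeats 1000000 in
theorem stmt_2 (n : ℕ) (hn : 3 ≤ n)
    (f : EuclideanSpace ℝ (Fin n) → ℝ)
    (hf : ContDiff ℝ (⊤ : ℕ∞) f) (hc : HasCompactSupport f)
    (h0 : ∀ x ∈ tsupport f, x ≠ 0) :
    ∫ x, (inner ℝ x (gradient f x) : ℝ) ^ 2 / ‖x‖ ^ 2 ≥
      (((n : ℝ) - 2) / 2) ^ 2 * ∫ x, (f x) ^ 2 / ‖x‖ ^ 2 := by
  have hfc : Continuous f := hf.continuous
  have hfd : Continuous (fderiv ℝ f) := hf.continuous_fderiv (by simp)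
  -- a small ball around the origin where `f` vanishes
  have h0' : (0 : EuclideanSpace ℝ (Fin n)) ∉ tsupport f := fun h => h0 0 h rfl
  obtain ⟨ε, hε, hball⟩ := Metric.isOpen_iff.1 (isClosed_tsupport f).isOpen_compl 0 h0'
  have hfz : ∀ x : EuclideanSpace ℝ (Fin n), ‖x‖ < ε → f x = 0 := fun x hx =>
    image_eq_zero_of_notMem_tsupport (hball (mem_ball_zero_iff.2 hx))
  have hfdz : ∀ x : EuclideanSpace ℝ (Fin n), ‖x‖ < ε → fderiv ℝ f x = 0 := by
    intro x hx
    by_contra h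
    exact hball (mem_ball_zero_iff.2 hx) (support_fderiv_subset ℝ h)
  have htε : ∀ x : EuclideanSpace ℝ (Fin n), x ∈ tsupport f → ε ≤ ‖x‖ := by
    intro x hx
    by_contra h
    exact hball (mem_ball_zero_iff.2 (not_le.1 h)) hx
  -- a big ball containing the support
  obtain ⟨R, hR0, hRsub⟩ := hc.isBounded.subset_closedBall_lt 0 0
  have hfR : ∀ x : EuclideanSpace ℝ (Fin n), R < ‖x‖ → f x = 0 := fun x hx =>
    image_eq_zero_of_notMem_tsupport
      (fun h => absurd (mem_closedBall_zero_iff.1 (hRsub h)) (not_le.2 hx))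
  -- bounds
  obtain ⟨M, hM⟩ := hc.exists_bound_of_continuous hfc
  obtain ⟨M', hM'⟩ := (hc.fderiv ℝ).exists_bound_of_continuous hfd
  have hM0 : 0 ≤ M := le_trans (norm_nonneg _) (hM 0)
  have hM'0 : 0 ≤ M' := le_trans (norm_nonneg _) (hM' 0)
  -- continuity of quotients by ‖x‖²
  have hcd : ∀ (δ : ℝ), 0 < δ → ∀ u : EuclideanSpace ℝ (Fin n) → ℝ, Continuous u →
      (∀ x : EuclideanSpace ℝ (Fin n), ‖x‖ < δ → u x = 0) →
      Continuous (fun x : EuclideanSpace ℝ (Fin n) => u x / ‖x‖ ^ 2) := by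
    intro δ hδ u hu hz
    rw [continuous_iff_continuousAt]
    intro x
    rcases eq_or_ne x 0 with rfl | hx
    · refine ContinuousAt.congr (continuousAt_const (y := (0:ℝ))) ?_
      filter_upwards [Metric.ball_mem_nhds (0 : EuclideanSpace ℝ (Fin n)) hδ] with y hy
      rw [hz y (mem_ball_zero_iff.1 hy), zero_div]
    · exact hu.continuousAt.div ((continuous_norm.pow 2).continuousAt)
        (pow_ne_zero 2 (norm_ne_zero_iff.2 hx))
  -- integrability of quotients by ‖x‖²
  have hint : ∀ (δ ρ : ℝ), 0 < δ → ∀ u : EuclideanSpace ℝ (Fin n) → ℝ, Continuous u →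
      (∀ x : EuclideanSpace ℝ (Fin n), ‖x‖ < δ → u x = 0) →
      (∀ x : EuclideanSpace ℝ (Fin n), ρ < ‖x‖ → u x = 0) →
      Integrable (fun x : EuclideanSpace ℝ (Fin n) => u x / ‖x‖ ^ 2) := by
    intro δ ρ hδ u hu hz hρ
    refine (hcd δ hδ u hu hz).integrable_of_hasCompactSupport ?_
    refine HasCompactSupport.intro (isCompact_closedBall (0 : EuclideanSpace ℝ (Fin n)) ρ) ?_
    intro x hx
    rw [hρ x (by simpa [Metric.mem_closedBall, dist_zero_right, not_le] using hx), zero_div]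
  -- the three integrands
  have hIA : Integrable (fun x : EuclideanSpace ℝ (Fin n) => f x ^ 2 / ‖x‖ ^ 2) :=
    hint ε R hε _ (hfc.pow 2) (fun x hx => by rw [hfz x hx]; ring)
      (fun x hx => by rw [hfR x hx]; ring)
  have hdc : Continuous (fun x : EuclideanSpace ℝ (Fin n) => fderiv ℝ f x x) :=
    hfd.clm_apply continuous_id
  have hID : Integrable (fun x : EuclideanSpace ℝ (Fin n) => (fderiv ℝ f x x) ^ 2 / ‖x‖ ^ 2) :=
    hint ε R hε _ (hdc.pow 2) (fun x hx => by rw [hfdz x hx]; simp)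
      (fun x hx => by
        rw [show fderiv ℝ f x = 0 by
          by_contra h
          exact absurd (mem_closedBall_zero_iff.1
            (hRsub (support_fderiv_subset ℝ h))) (not_le.2 hx)]
        simp)
  have hIB : Integrable (fun x : EuclideanSpace ℝ (Fin n) => f x * fderiv ℝ f x x / ‖x‖ ^ 2) :=
    hint ε R hε _ (hfc.mul hdc) (fun x hx => by rw [hfz x hx]; ring)
      (fun x hx => by rw [hfR x hx]; ring)
  set A : ℝ := ∫ x : EuclideanSpace ℝ (Fin n), f x ^ 2 / ‖x‖ ^ 2 with hAdef
  set B : ℝ := ∫ x : EuclideanSpace ℝ (Fin n), f x * fderiv ℝ f x x / ‖x‖ ^ 2 with hBdef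
  -- the key identity 2B = (2-n)A
  have hkey : 2 * B = (2 - (n:ℝ)) * A := by
    set F : ℝ → EuclideanSpace ℝ (Fin n) → ℝ := fun t x => f (t • x) ^ 2 / ‖x‖ ^ 2 with hF
    set F' : ℝ → EuclideanSpace ℝ (Fin n) → ℝ :=
      fun t x => 2 * f (t • x) * fderiv ℝ f (t • x) x / ‖x‖ ^ 2 with hF'
    set C : ℝ := 2 * M * M' / (2 * ε / 3) with hCdef
    have hC0 : 0 ≤ C := div_nonneg (by positivity) (by positivity)
    have hFmeas : ∀ᶠ t in nhds (1:ℝ), AEStronglyMeasurable (F t) volume := by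
      filter_upwards [Ioo_mem_nhds (by norm_num : (1/2:ℝ) < 1) (by norm_num : (1:ℝ) < 3/2)]
        with t ht
      refine (hcd (2 * ε / 3) (by positivity) _ (by fun_prop) ?_).aestronglyMeasurable
      intro x hx
      show f (t • x) ^ 2 = 0
      have : ‖t • x‖ < ε := by
        rw [norm_smul, Real.norm_eq_abs, abs_of_pos (lt_trans (by norm_num) ht.1)]
        nlinarith [norm_nonneg x, ht.1, ht.2]
      rw [hfz _ this]; ring
    have hFint : Integrable (F 1) volume := by
      exact hint ε R hε (fun x : EuclideanSpace ℝ (Fin n) => f ((1:ℝ) • x) ^ 2)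
        (by fun_prop) (fun x hx => by show f ((1:ℝ) • x) ^ 2 = 0; rw [hfz _ (by simpa using hx)]; ring)
        (fun x hx => by show f ((1:ℝ) • x) ^ 2 = 0; rw [hfR _ (by simpa using hx)]; ring)
    have hF'meas : AEStronglyMeasurable (F' 1) volume := by
      refine (hcd ε hε (fun x : EuclideanSpace ℝ (Fin n) =>
        2 * f ((1:ℝ) • x) * fderiv ℝ f ((1:ℝ) • x) x) ?_ ?_).aestronglyMeasurable
      · exact ((continuous_const.mul (hfc.comp (continuous_id.const_smul (1:ℝ)))).mul
          ((hfd.comp (continuous_id.const_smul (1:ℝ))).clm_apply continuous_id))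
      · intro x hx
        show 2 * f ((1:ℝ) • x) * fderiv ℝ f ((1:ℝ) • x) x = 0
        rw [hfz _ (by simpa using hx)]; ring
    have hbound : ∀ x : EuclideanSpace ℝ (Fin n), ∀ t ∈ Metric.ball (1:ℝ) (1/2),
        ‖F' t x‖ ≤ Set.indicator (Metric.closedBall (0:EuclideanSpace ℝ (Fin n)) (2*R))
          (fun _ => C) x := by
      intro x t ht
      rw [Metric.mem_ball, Real.dist_eq] at ht
      have ht' := abs_lt.1 ht
      have ht0 : (0:ℝ) < t := by linarith [ht'.1]
      have hnorm : ‖t • x‖ = t * ‖x‖ := by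
        rw [norm_smul, Real.norm_eq_abs, abs_of_pos ht0]
      by_cases hts : t • x ∈ tsupport f
      · have hx2R : x ∈ Metric.closedBall (0:EuclideanSpace ℝ (Fin n)) (2*R) := by
          rw [Metric.mem_closedBall, dist_zero_right]
          have h1 : t * ‖x‖ ≤ R := by
            have := mem_closedBall_zero_iff.1 (hRsub hts); rw [hnorm] at this; exact this
          nlinarith [norm_nonneg x, ht'.1]
        have hxε : 2 * ε / 3 ≤ ‖x‖ := by
          have h1 : ε ≤ t * ‖x‖ := by
            have := htε _ hts; rw [hnorm] at this; exact this
          nlinarith [norm_nonneg x, ht'.2]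
        rw [Set.indicator_of_mem hx2R]
        have hxpos : (0:ℝ) < ‖x‖ := lt_of_lt_of_le (by positivity) hxε
        have hb1 : |f (t • x)| ≤ M := by
          have := hM (t • x); rwa [Real.norm_eq_abs] at this
        have hb2 : |fderiv ℝ f (t • x) x| ≤ M' * ‖x‖ := by
          calc |fderiv ℝ f (t • x) x| ≤ ‖fderiv ℝ f (t • x)‖ * ‖x‖ :=
                (fderiv ℝ f (t • x)).le_opNorm x
          _ ≤ M' * ‖x‖ := mul_le_mul_of_nonneg_right (hM' (t • x)) (norm_nonneg x)
        have h3 : |2 * f (t • x) * fderiv ℝ f (t • x) x| ≤ 2 * M * (M' * ‖x‖) := by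
          rw [abs_mul, abs_mul, abs_two]
          have := mul_le_mul (mul_le_mul_of_nonneg_left hb1 (by norm_num : (0:ℝ) ≤ 2)) hb2
            (abs_nonneg _) (by positivity)
          linarith
        calc ‖F' t x‖ = |2 * f (t • x) * fderiv ℝ f (t • x) x| / ‖x‖ ^ 2 := by
              rw [hF', Real.norm_eq_abs, abs_div,
                abs_of_nonneg (by positivity : (0:ℝ) ≤ ‖x‖ ^ 2)]
          _ ≤ 2 * M * (M' * ‖x‖) / ‖x‖ ^ 2 := by gcongr
          _ = 2 * M * M' / ‖x‖ := by
              field_simp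
          _ ≤ C := by
              rw [hCdef]
              exact div_le_div_of_nonneg_left (by positivity) (by positivity) hxε
      · have h1 : f (t • x) = 0 := image_eq_zero_of_notMem_tsupport hts
        have hz : F' t x = 0 := by simp only [hF', h1]; ring
        rw [hz, norm_zero]
        exact Set.indicator_nonneg (fun _ _ => hC0) x
    have hbint : Integrable (Set.indicator
        (Metric.closedBall (0:EuclideanSpace ℝ (Fin n)) (2*R)) (fun _ => C)) volume := by
      rw [integrable_indicator_iff measurableSet_closedBall]
      exact integrableOn_const measure_closedBall_lt_top.ne
    have hdiff : ∀ x : EuclideanSpace ℝ (Fin n), ∀ t ∈ Metric.ball (1:ℝ) (1/2),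
        HasDerivAt (fun t => F t x) (F' t x) t := by
      intro x t _
      have h2 : HasDerivAt (fun t : ℝ => t • x) x t := by
        simpa using (hasDerivAt_id t).smul_const x
      have h1 : HasDerivAt (fun t : ℝ => f (t • x)) (fderiv ℝ f (t • x) x) t :=
        (hf.differentiable (by simp) (t • x)).hasFDerivAt.comp_hasDerivAt t h2
      have h4 := (h1.pow 2).div_const (‖x‖ ^ 2)
      have h5 : ((2:ℕ) : ℝ) * f (t • x) ^ (2 - 1) * fderiv ℝ f (t • x) x / ‖x‖ ^ 2
          = F' t x := by
        rw [hF']; push_cast; ring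
      rw [h5] at h4
      exact h4
    have hres := hasDerivAt_integral_of_dominated_loc_of_deriv_le
      (Metric.ball_mem_nhds (1:ℝ) (by norm_num : (0:ℝ) < 1/2)) hFmeas hFint hF'meas
      (Filter.Eventually.of_forall hbound) hbint (Filter.Eventually.of_forall hdiff)
    have hΦ : HasDerivAt (fun t => ∫ x, F t x) (∫ x, F' 1 x) 1 := hres.2
    have hF'1 : (∫ x, F' 1 x) = 2 * B := by
      rw [hBdef, ← integral_const_mul]
      congr 1
      funext x
      rw [hF']
      simp only [one_smul]
      ring
    have hscale : ∀ t : ℝ, 0 < t → (∫ x, F t x) = t ^ 2 / t ^ n * A := by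
      intro t ht
      have h1 : (fun x : EuclideanSpace ℝ (Fin n) => F t x)
          = fun x : EuclideanSpace ℝ (Fin n) =>
              t ^ 2 * ((fun y : EuclideanSpace ℝ (Fin n) => f y ^ 2 / ‖y‖ ^ 2) (t • x)) := by
        funext x
        rcases eq_or_ne x 0 with rfl | hx
        · simp [hF, smul_zero]
        · have hxn : (0:ℝ) < ‖x‖ := norm_pos_iff.2 hx
          rw [hF]
          show f (t • x) ^ 2 / ‖x‖ ^ 2 = t ^ 2 * (f (t • x) ^ 2 / ‖t • x‖ ^ 2)
          rw [norm_smul, Real.norm_eq_abs, abs_of_pos ht, mul_pow]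
          field_simp
      rw [show (∫ x, F t x) = ∫ x : EuclideanSpace ℝ (Fin n),
            t ^ 2 * ((fun y : EuclideanSpace ℝ (Fin n) => f y ^ 2 / ‖y‖ ^ 2) (t • x)) from by
          rw [← h1]]
      rw [integral_const_mul,
        MeasureTheory.Measure.integral_comp_smul_of_nonneg (volume)
          (fun y : EuclideanSpace ℝ (Fin n) => f y ^ 2 / ‖y‖ ^ 2) t (hR := ht.le)]
      rw [smul_eq_mul, finrank_euclideanSpace_fin, ← hAdef]
      rw [div_eq_mul_inv, mul_assoc]
    have hΨ : HasDerivAt (fun t : ℝ => t ^ 2 / t ^ n * A) ((2 - (n:ℝ)) * A) 1 := by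
      have h1 : HasDerivAt (fun t : ℝ => t ^ 2 / t ^ n)
          ((((2:ℕ):ℝ) * 1 ^ (2-1) * 1 ^ n - 1 ^ 2 * (((n:ℕ):ℝ) * 1 ^ (n - 1))) / (1 ^ n) ^ 2) 1 :=
        (hasDerivAt_pow 2 (1:ℝ)).div (hasDerivAt_pow n (1:ℝ)) (by simp)
      have h2 := h1.mul_const A
      have h3 : (((2:ℕ):ℝ) * 1 ^ (2-1) * 1 ^ n - 1 ^ 2 * (((n:ℕ):ℝ) * 1 ^ (n - 1))) / (1 ^ n) ^ 2 * A
          = (2 - (n:ℝ)) * A := by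
        simp
      rw [h3] at h2
      exact h2
    have hΦΨ : (fun t => ∫ x, F t x) =ᶠ[nhds (1:ℝ)] fun t : ℝ => t ^ 2 / t ^ n * A := by
      filter_upwards [Ioi_mem_nhds (zero_lt_one : (0:ℝ) < 1)] with t ht
      exact hscale t ht
    have hΦ2 : HasDerivAt (fun t => ∫ x, F t x) ((2 - (n:ℝ)) * A) 1 :=
      hΨ.congr_of_eventuallyEq hΦΨ
    rw [← hF'1]
    exact hΦ.unique hΦ2
  -- final expansion of the square
  set c : ℝ := ((n:ℝ) - 2) / 2 with hcdef
  have hq : (0:ℝ) ≤ ∫ x : EuclideanSpace ℝ (Fin n), (fderiv ℝ f x x + c * f x) ^ 2 / ‖x‖ ^ 2 :=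
    integral_nonneg fun x => div_nonneg (sq_nonneg _) (by positivity)
  have hexp : (∫ x : EuclideanSpace ℝ (Fin n), (fderiv ℝ f x x + c * f x) ^ 2 / ‖x‖ ^ 2)
      = (∫ x : EuclideanSpace ℝ (Fin n), (fderiv ℝ f x x) ^ 2 / ‖x‖ ^ 2)
        + ((2 * c) * B + c ^ 2 * A) := by
    have h1 : (fun x : EuclideanSpace ℝ (Fin n) => (fderiv ℝ f x x + c * f x) ^ 2 / ‖x‖ ^ 2)
        = fun x : EuclideanSpace ℝ (Fin n) => (fderiv ℝ f x x) ^ 2 / ‖x‖ ^ 2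
            + ((2 * c) * (f x * fderiv ℝ f x x / ‖x‖ ^ 2) + c ^ 2 * (f x ^ 2 / ‖x‖ ^ 2)) := by
      funext x
      have h2 : (fderiv ℝ f x x + c * f x) ^ 2
          = (fderiv ℝ f x x) ^ 2 + ((2 * c) * (f x * fderiv ℝ f x x) + c ^ 2 * f x ^ 2) := by
        ring
      rw [h2, add_div, add_div]
      ring
    have hQ1 : Integrable (fun x : EuclideanSpace ℝ (Fin n) =>
        (2 * c) * (f x * fderiv ℝ f x x / ‖x‖ ^ 2)) volume := hIB.const_mul (2 * c)
    have hQ2 : Integrable (fun x : EuclideanSpace ℝ (Fin n) =>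
        c ^ 2 * (f x ^ 2 / ‖x‖ ^ 2)) volume := hIA.const_mul (c ^ 2)
    have hQ : Integrable (fun x : EuclideanSpace ℝ (Fin n) =>
        (2 * c) * (f x * fderiv ℝ f x x / ‖x‖ ^ 2) + c ^ 2 * (f x ^ 2 / ‖x‖ ^ 2)) volume :=
      hQ1.add hQ2
    rw [h1, integral_add hID hQ, integral_add hQ1 hQ2,
      integral_const_mul, integral_const_mul, ← hAdef, ← hBdef]
  have hBA : B = -c * A := by
    rw [hcdef]
    linear_combination hkey / 2
  have hDge : (∫ x : EuclideanSpace ℝ (Fin n), (fderiv ℝ f x x) ^ 2 / ‖x‖ ^ 2) ≥ c ^ 2 * A := by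
    rw [hexp, hBA] at hq
    have hr : (2 * c) * (-c * A) + c ^ 2 * A = -(c ^ 2 * A) := by ring
    rw [hr] at hq
    linarith
  have hgrad : ∀ x : EuclideanSpace ℝ (Fin n), (inner ℝ x (gradient f x) : ℝ) = fderiv ℝ f x x := by
    intro x
    rw [real_inner_comm]
    exact InnerProductSpace.toDual_symm_apply
  simp only [hgrad]
  exact hDge
end

section
/- For n ≥ 5 and f ∈ C_0^∞(ℝⁿ \ {0}), the Rellich inequality holds: ∫_{ℝⁿ} |Δf(x)|² dⁿx ≥ (n(n-4)/4)² ∫_{ℝⁿ} |x|^{-4} |f(x)|² dⁿx. -/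
open MeasureTheory

open Metric Set Function Filter ContDiff

namespace RellichAux

lemma integral_cauchy_schwarz {α : Type*} [MeasurableSpace α] {μ : Measure α}
    (f g : α → ℝ) (hf : Integrable (fun x => f x ^ 2) μ)
    (hg : Integrable (fun x => g x ^ 2) μ) (hfg : Integrable (fun x => f x * g x) μ) :
    (∫ x, f x * g x ∂μ) ^ 2 ≤ (∫ x, f x ^ 2 ∂μ) * (∫ x, g x ^ 2 ∂μ) := by
  have key : ∀ t : ℝ, 0 ≤ (∫ x, f x ^ 2 ∂μ) * (t * t) + (2 * ∫ x, f x * g x ∂μ) * t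
      + ∫ x, g x ^ 2 ∂μ := by
    intro t
    have h0 : 0 ≤ ∫ x, (t * f x + g x) ^ 2 ∂μ := integral_nonneg fun x => sq_nonneg _
    have hexp : (fun x => (t * f x + g x) ^ 2)
        = fun x => ((t * t) * (f x ^ 2) + (2 * t) * (f x * g x)) + g x ^ 2 := by
      funext x; ring
    rw [hexp] at h0
    have i1 : Integrable (fun x => t * t * f x ^ 2) μ := hf.const_mul _
    have i2 : Integrable (fun x => 2 * t * (f x * g x)) μ := hfg.const_mul _
    have i12 : Integrable (fun x => t * t * f x ^ 2 + 2 * t * (f x * g x)) μ := i1.add i2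
    rw [integral_add i12 hg, integral_add i1 i2,
      MeasureTheory.integral_const_mul, MeasureTheory.integral_const_mul] at h0
    linarith
  have hd := discrim_le_zero key
  rw [discrim] at hd
  nlinarith [hd]

variable {n : ℕ}
local notation "E" => EuclideanSpace ℝ (Fin n)

noncomputable def qq (x : E) : ℝ := ‖x‖ ^ 2

lemma qq_eq_sum (x : E) : qq x = ∑ i, x i ^ 2 := by
  rw [qq, ← real_inner_self_eq_norm_sq]
  rw [real_inner_self_eq_norm_sq, EuclideanSpace.norm_sq_eq]; simp

lemma qq_pos {x : E} (hx : x ≠ 0) : 0 < qq x := by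
  have h : 0 < ‖x‖ := norm_pos_iff.2 hx
  rw [qq]; positivity

lemma hasFDerivAt_qq (x : E) : HasFDerivAt qq (2 • (innerSL ℝ x)) x :=
  (hasStrictFDerivAt_norm_sq x).hasFDerivAt

lemma innerSL_single (x : E) (i : Fin n) :
    (innerSL ℝ x) (EuclideanSpace.single i 1) = x i := by
  simp [EuclideanSpace.inner_single_right]

lemma contDiff_qq : ContDiff ℝ ∞ (qq : E → ℝ) := contDiff_norm_sq ℝ

lemma hasFDerivAt_qq_inv {x : E} (hx : x ≠ 0) :
    HasFDerivAt (fun y : E => (qq y)⁻¹) ((-(qq x ^ 2)⁻¹) • (2 • (innerSL ℝ x))) x :=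
  (hasDerivAt_inv (qq_pos hx).ne').comp_hasFDerivAt x (hasFDerivAt_qq x)

lemma fderiv_qq_inv_apply {x : E} (hx : x ≠ 0) (i : Fin n) :
    fderiv ℝ (fun y : E => (qq y)⁻¹) x (EuclideanSpace.single i 1)
      = -(2 * x i) * (qq x * qq x)⁻¹ := by
  rw [(hasFDerivAt_qq_inv hx).fderiv]
  have hq := (qq_pos hx).ne'
  simp [innerSL_single, two_smul]
  field_simp
  ring

lemma hasFNd {x : E} (hx : x ≠ 0) (i : Fin n) :
    HasFDerivAt (fun y : E => y i * ((qq y) * (qq y))⁻¹)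
      ((x i) • ((-((qq x * qq x) ^ 2)⁻¹) •
          ((qq x) • (2 • (innerSL ℝ x)) + (qq x) • (2 • (innerSL ℝ x))))
        + ((qq x * qq x)⁻¹) • (EuclideanSpace.proj i : E →L[ℝ] ℝ)) x := by
  have h2 : HasFDerivAt (fun y : E => (qq y) * (qq y))
      ((qq x) • (2 • (innerSL ℝ x)) + (qq x) • (2 • (innerSL ℝ x))) x :=
    (hasFDerivAt_qq x).mul (hasFDerivAt_qq x)
  have hne : qq x * qq x ≠ 0 := mul_ne_zero (qq_pos hx).ne' (qq_pos hx).ne'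
  exact ((EuclideanSpace.proj i).hasFDerivAt).mul ((hasDerivAt_inv hne).comp_hasFDerivAt x h2)

lemma fderiv_coord_qqsq_inv {x : E} (hx : x ≠ 0) (i : Fin n) :
    fderiv ℝ (fun y : E => y i * ((qq y) * (qq y))⁻¹) x (EuclideanSpace.single i 1)
      = (qq x * qq x)⁻¹ - 4 * (x i) ^ 2 * ((qq x) ^ 3)⁻¹ := by
  rw [(hasFNd hx i).fderiv]
  have hq := (qq_pos hx).ne'
  simp [innerSL_single, EuclideanSpace.single_apply]
  field_simp
  ring

end RellichAux

open RellichAux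

set_option maxHeartbeats 3000000 in
theorem stmt_5 (n : ℕ) (hn : 5 ≤ n)
    (f : EuclideanSpace ℝ (Fin n) → ℝ)
    (hf : ContDiff ℝ (⊤ : ℕ∞) f) (hc : HasCompactSupport f)
    (h0 : ∀ x ∈ tsupport f, x ≠ 0) :
    ∫ x, (lap f x) ^ 2 ≥
      ((n : ℝ) * ((n : ℝ) - 4) / 4) ^ 2 * ∫ x, (f x) ^ 2 / ‖x‖ ^ 4 := by
  classical
  have h1 : (∞ : WithTop ℕ∞) ≠ 0 := by simp
  have hsm : ContDiff ℝ ∞ f := hf.of_le (by simp)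
  set e : Fin n → EuclideanSpace ℝ (Fin n) := fun i => EuclideanSpace.single i 1 with he
  set u' : Fin n → EuclideanSpace ℝ (Fin n) → ℝ := fun i x => fderiv ℝ f x (e i) with hu'
  -- a ball around the origin avoiding the support
  have h0' : (0 : EuclideanSpace ℝ (Fin n)) ∈ (tsupport f)ᶜ := fun h => (h0 0 h) rfl
  obtain ⟨ε, hε, hball⟩ :
      ∃ ε > 0, Metric.ball (0 : EuclideanSpace ℝ (Fin n)) ε ⊆ (tsupport f)ᶜ :=
    Metric.isOpen_iff.1 (isClosed_tsupport f).isOpen_compl 0 h0'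
  -- the cutoff
  set bump : ContDiffBump (0 : EuclideanSpace ℝ (Fin n)) :=
    ⟨ε/3, ε/2, by positivity, by linarith⟩ with hbump
  set χ : EuclideanSpace ℝ (Fin n) → ℝ := fun x => 1 - bump x with hχdef
  have hχ : ContDiff ℝ ∞ χ := contDiff_const.sub (bump.contDiff (n := (⊤ : ℕ∞)))
  have hχ0 : ∀ x : EuclideanSpace ℝ (Fin n), ‖x‖ < ε/3 → χ x = 0 := by
    intro x hx
    have : bump x = 1 := bump.one_of_mem_closedBall (by
      show x ∈ Metric.closedBall (0 : EuclideanSpace ℝ (Fin n)) (ε/3)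
      simp [Metric.mem_closedBall, dist_zero_right, hx.le])
    simp [hχdef, this]
  set U : Set (EuclideanSpace ℝ (Fin n)) := {x | ε/2 < ‖x‖} with hUdef
  have hUopen : IsOpen U := isOpen_lt continuous_const continuous_norm
  have hχ1 : ∀ x ∈ U, χ x = 1 := by
    intro x hx
    have : bump x = 0 := bump.zero_of_le_dist (by
      show ε/2 ≤ dist x 0
      rw [dist_zero_right]; exact le_of_lt hx)
    simp [hχdef, this]
  have hχnonneg : ∀ x, 0 ≤ χ x := fun x => by
    have := bump.le_one (x := x); simp [hχdef]; linarith
  have hχle1 : ∀ x, χ x ≤ 1 := fun x => by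
    have := bump.nonneg (x := x); simp [hχdef]; linarith
  have hUne : ∀ x ∈ U, x ≠ 0 := by
    intro x hx h; rw [h] at hx; simp [hUdef] at hx; linarith
  have hSU : tsupport f ⊆ U := by
    intro x hx
    have hxb : x ∉ Metric.ball (0 : EuclideanSpace ℝ (Fin n)) ε := fun h => (hball h) hx
    have : ε ≤ ‖x‖ := by
      by_contra h
      exact hxb (by simp [Metric.mem_ball, dist_zero_right]; linarith)
    show ε/2 < ‖x‖; linarith
  -- vanishing off the support
  have hfZ : ∀ x, x ∉ tsupport f → f x = 0 := fun x hx => image_eq_zero_of_notMem_tsupport hx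
  have hu'Z : ∀ i, ∀ x, x ∉ tsupport f → u' i x = 0 := by
    intro i x hx
    have : fderiv ℝ f x = 0 :=
      image_eq_zero_of_notMem_tsupport (fun h => hx (tsupport_fderiv_subset ℝ h))
    simp [hu', this]
  have hlapZ : ∀ x, x ∉ tsupport f → lap f x = 0 := by
    intro x hx
    have : fderiv ℝ (fderiv ℝ f) x = 0 :=
      image_eq_zero_of_notMem_tsupport
        (fun h => hx (tsupport_fderiv_subset ℝ (tsupport_fderiv_subset ℝ h)))
    simp [lap, this]
  have hfZU : ∀ x, x ∉ U → f x = 0 := fun x hx => hfZ x (fun h => hx (hSU h))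
  have hu'ZU : ∀ i, ∀ x, x ∉ U → u' i x = 0 := fun i x hx => hu'Z i x (fun h => hx (hSU h))
  -- compact support helper
  have hcs : ∀ g : EuclideanSpace ℝ (Fin n) → ℝ,
      (∀ x, x ∉ tsupport f → g x = 0) → HasCompactSupport g :=
    fun g h => HasCompactSupport.intro hc h
  have ics : ∀ g : EuclideanSpace ℝ (Fin n) → ℝ, Continuous g →
      (∀ x, x ∉ tsupport f → g x = 0) → Integrable g volume :=
    fun g hg h => hg.integrable_of_hasCompactSupport (hcs g h)
  -- smoothness of the weights
  have hmix : ∀ g : EuclideanSpace ℝ (Fin n) → ℝ,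
      ContDiffOn ℝ ∞ g {x : EuclideanSpace ℝ (Fin n) | x ≠ 0} →
      ContDiff ℝ ∞ (fun x => χ x * g x) := by
    intro g hg
    rw [contDiff_iff_contDiffAt]
    intro x
    by_cases hx : x = 0
    · subst hx
      have hev : (fun x => χ x * g x) =ᶠ[nhds (0 : EuclideanSpace ℝ (Fin n))]
          (fun _ => 0) := by
        filter_upwards [Metric.ball_mem_nhds (0 : EuclideanSpace ℝ (Fin n))
          (by positivity : (0:ℝ) < ε/3)] with y hy
        rw [hχ0 y (by simpa [dist_zero_right] using hy), zero_mul]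
      exact (contDiffAt_const (c := (0:ℝ))).congr_of_eventuallyEq hev
    · exact hχ.contDiffAt.mul ((hg x hx).contDiffAt ((isOpen_compl_singleton).mem_nhds hx))
  set W : EuclideanSpace ℝ (Fin n) → ℝ := fun x => χ x * (qq x)⁻¹ with hWdef
  set V : Fin n → EuclideanSpace ℝ (Fin n) → ℝ :=
    fun i x => χ x * (x i * ((qq x) * (qq x))⁻¹) with hVdef
  have hW : ContDiff ℝ ∞ W :=
    hmix _ ((contDiff_qq.contDiffOn).inv (fun x hx => (qq_pos hx).ne'))
  have hV : ∀ i, ContDiff ℝ ∞ (V i) := by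
    intro i
    apply hmix _
    exact ((EuclideanSpace.proj (𝕜 := ℝ) i).contDiff.contDiffOn).mul
      (((contDiff_qq.mul contDiff_qq).contDiffOn).inv
        (fun x hx => mul_ne_zero (qq_pos hx).ne' (qq_pos hx).ne'))
  set gW : Fin n → EuclideanSpace ℝ (Fin n) → ℝ :=
    fun i x => fderiv ℝ W x (e i) with hgWdef
  have hgW : ∀ i, ContDiff ℝ ∞ (gW i) := fun i =>
    (hW.fderiv_right (m := ∞) (by exact_mod_cast le_top)).clm_apply contDiff_const
  have hu'sm : ∀ i, ContDiff ℝ ∞ (u' i) := fun i =>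
    (hsm.fderiv_right (m := ∞) (by exact_mod_cast le_top)).clm_apply contDiff_const
  have hWnonneg : ∀ x, 0 ≤ W x := by
    intro x
    have : (0:ℝ) ≤ (qq x)⁻¹ := by
      rw [qq]; positivity
    exact mul_nonneg (hχnonneg x) this
  -- derivative of W on U
  have hWU : ∀ x ∈ U, W x = (qq x)⁻¹ := by
    intro x hx; rw [hWdef]; simp only; rw [hχ1 x hx, one_mul]
  have hdW : ∀ x ∈ U, ∀ i, gW i x = -(2 * x i) * (qq x * qq x)⁻¹ := by
    intro x hx i
    have hev : W =ᶠ[nhds x] (fun y => (qq y)⁻¹) := by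
      filter_upwards [hUopen.mem_nhds hx] with y hy
      exact hWU y hy
    rw [hgWdef]; simp only
    rw [hev.fderiv_eq, fderiv_qq_inv_apply (hUne x hx) i]
  -- second derivative of W on U
  have hd2W : ∀ x ∈ U, ∀ i, fderiv ℝ (gW i) x (e i)
      = -2 * (qq x * qq x)⁻¹ + 8 * (x i) ^ 2 * ((qq x) ^ 3)⁻¹ := by
    intro x hx i
    have hev : gW i =ᶠ[nhds x] (fun y => (-2 : ℝ) * (y i * (qq y * qq y)⁻¹)) := by
      filter_upwards [hUopen.mem_nhds hx] with y hy
      rw [hdW y hy i]; ring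
    rw [hev.fderiv_eq]
    have hdiff : DifferentiableAt ℝ (fun y : EuclideanSpace ℝ (Fin n) =>
        y i * (qq y * qq y)⁻¹) x := (hasFNd (hUne x hx) i).differentiableAt
    rw [fderiv_const_mul hdiff]
    rw [ContinuousLinearMap.smul_apply, fderiv_coord_qqsq_inv (hUne x hx) i]
    simp only [smul_eq_mul]
    ring
  -- derivative of V on U
  have hdV : ∀ x ∈ U, ∀ i, fderiv ℝ (V i) x (e i)
      = (qq x * qq x)⁻¹ - 4 * (x i) ^ 2 * ((qq x) ^ 3)⁻¹ := by
    intro x hx i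
    have hev : V i =ᶠ[nhds x] (fun y => y i * (qq y * qq y)⁻¹) := by
      filter_upwards [hUopen.mem_nhds hx] with y hy
      rw [hVdef]; simp only; rw [hχ1 y hy, one_mul]
    rw [hev.fderiv_eq, fderiv_coord_qqsq_inv (hUne x hx) i]
  -- sums of second derivatives on U
  have hqqne : ∀ x ∈ U, qq x ≠ 0 := fun x hx => (qq_pos (hUne x hx)).ne'
  have hsum2 : ∀ x ∈ U, ∑ i, fderiv ℝ (gW i) x (e i)
      = (8 - 2 * (n:ℝ)) * (qq x * qq x)⁻¹ := by
    intro x hx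
    have : ∀ i, fderiv ℝ (gW i) x (e i)
        = -2 * (qq x * qq x)⁻¹ + 8 * ((qq x) ^ 3)⁻¹ * (x i) ^ 2 := by
      intro i; rw [hd2W x hx i]; ring
    rw [Finset.sum_congr rfl (fun i _ => this i), Finset.sum_add_distrib,
      Finset.sum_const, ← Finset.mul_sum, ← qq_eq_sum]
    have h := hqqne x hx
    simp only [Finset.card_univ, Fintype.card_fin, nsmul_eq_mul]
    field_simp
    ring
  have hsumV : ∀ x ∈ U, ∑ i, fderiv ℝ (V i) x (e i)
      = ((n:ℝ) - 4) * (qq x * qq x)⁻¹ := by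
    intro x hx
    have : ∀ i, fderiv ℝ (V i) x (e i)
        = (qq x * qq x)⁻¹ + (-4) * ((qq x) ^ 3)⁻¹ * (x i) ^ 2 := by
      intro i; rw [hdV x hx i]; ring
    rw [Finset.sum_congr rfl (fun i _ => this i), Finset.sum_add_distrib,
      Finset.sum_const, ← Finset.mul_sum, ← qq_eq_sum]
    have h := hqqne x hx
    simp only [Finset.card_univ, Fintype.card_fin, nsmul_eq_mul]
    field_simp
    ring
  -- integration by parts
  have ibp : ∀ (a b : EuclideanSpace ℝ (Fin n) → ℝ) (v : EuclideanSpace ℝ (Fin n)),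
      ContDiff ℝ ∞ a → ContDiff ℝ ∞ b → HasCompactSupport a →
      ∫ x, a x * fderiv ℝ b x v = -∫ x, fderiv ℝ a x v * b x := by
    intro a b v ha hb hca
    have hda : ContDiff ℝ ∞ (fun x : EuclideanSpace ℝ (Fin n) => fderiv ℝ a x v) :=
      (ha.fderiv_right (m := ∞) (by exact_mod_cast le_top)).clm_apply contDiff_const
    have hdb : ContDiff ℝ ∞ (fun x : EuclideanSpace ℝ (Fin n) => fderiv ℝ b x v) :=
      (hb.fderiv_right (m := ∞) (by exact_mod_cast le_top)).clm_apply contDiff_const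
    apply integral_mul_fderiv_eq_neg_fderiv_mul_of_integrable
    · apply (hda.continuous.mul hb.continuous).integrable_of_hasCompactSupport
      exact ((hca.fderiv ℝ).comp_left
        (g := fun L : EuclideanSpace ℝ (Fin n) →L[ℝ] ℝ => L v) (by simp)).mul_right
    · apply (ha.continuous.mul hdb.continuous).integrable_of_hasCompactSupport
      exact hca.mul_right
    · apply (ha.continuous.mul hb.continuous).integrable_of_hasCompactSupport
      exact hca.mul_right
    · exact fun x _ => ha.differentiable h1 x
    · exact fun x _ => hb.differentiable h1 x
  -- the Laplacian as a sum of derivatives of the u' i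
  have hd2f : ContDiff ℝ ∞ (fun x => fderiv ℝ (fderiv ℝ f) x) :=
    (hsm.fderiv_right (m := ∞) (by exact_mod_cast le_top)).fderiv_right
      (m := ∞) (by exact_mod_cast le_top)
  have hlapeq : ∀ x, lap f x = ∑ i, fderiv ℝ (u' i) x (e i) := by
    intro x
    rw [lap]
    apply Finset.sum_congr rfl
    intro i _
    have hcd : DifferentiableAt ℝ (fderiv ℝ f) x :=
      ((hsm.fderiv_right (m := ∞) (by exact_mod_cast le_top)).differentiable h1) x
    rw [hu']
    simp only
    rw [fderiv_clm_apply hcd (differentiableAt_const (e i))]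
    simp [he]
  have hlapc : Continuous (lap f) := by
    have : (lap f) = fun x => ∑ i, fderiv ℝ (fderiv ℝ f) x (e i) (e i) := rfl
    rw [this]
    apply continuous_finset_sum
    intro i _
    exact (((hd2f.clm_apply contDiff_const).clm_apply contDiff_const).continuous)
  -- notation for the main quantities
  set B : ℝ := ∫ x, (f x * W x) ^ 2 with hBdef
  set GG : ℝ := ∑ i, ∫ x, (u' i x) ^ 2 * W x with hGGdef
  set T : ℝ := ∑ i, ∫ x, f x * u' i x * fderiv ℝ W x (e i) with hTdef
  set I : ℝ := ∫ x, lap f x * (f x * W x) with hIdef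
  set J : ℝ := ∫ x, (f x * W x) * ((∑ i, u' i x * x i) * W x) with hJdef
  set A : ℝ := ∫ x, lap f x ^ 2 with hAdef
  -- continuity facts
  have hu'c : ∀ i, Continuous (u' i) := fun i => (hu'sm i).continuous
  have hgWc : ∀ i, Continuous (fun x => fderiv ℝ W x (e i)) := fun i => (hgW i).continuous
  have hdu'c : ∀ i, Continuous (fun x => fderiv ℝ (u' i) x (e i)) := fun i =>
    (((hu'sm i).fderiv_right (m := ∞) (by exact_mod_cast le_top)).clm_apply
      contDiff_const).continuous
  have hd2Wc : ∀ i, Continuous (fun x => fderiv ℝ (gW i) x (e i)) :=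
    fun i => (((hgW i).fderiv_right (m := ∞) (by exact_mod_cast le_top)).clm_apply
      contDiff_const).continuous
  have hdW' : ∀ x ∈ U, ∀ i, fderiv ℝ W x (e i) = -(2 * x i) * (qq x * qq x)⁻¹ := by
    intro x hx i
    have h := hdW x hx i
    rw [hgWdef] at h
    exact h
  have hdVc : ∀ i, Continuous (fun x => fderiv ℝ (V i) x (e i)) := fun i =>
    (((hV i).fderiv_right (m := ∞) (by exact_mod_cast le_top)).clm_apply
      contDiff_const).continuous
  -- integrability of all relevant integrands
  have iB : Integrable (fun x => (f x * W x) ^ 2) volume :=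
    ics _ ((hsm.continuous.mul hW.continuous).pow 2)
      (fun x hx => by rw [hfZ x hx]; ring)
  have iGG : ∀ i, Integrable (fun x => (u' i x) ^ 2 * W x) volume := fun i =>
    ics _ (((hu'c i).pow 2).mul hW.continuous)
      (fun x hx => by rw [hu'Z i x hx]; ring)
  have iT : ∀ i, Integrable (fun x => f x * u' i x * fderiv ℝ W x (e i)) volume := fun i =>
    ics _ ((hsm.continuous.mul (hu'c i)).mul (hgWc i))
      (fun x hx => by rw [hfZ x hx]; ring)
  have iI : ∀ i, Integrable (fun x => (f x * W x) * fderiv ℝ (u' i) x (e i)) volume := fun i =>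
    ics _ ((hsm.continuous.mul hW.continuous).mul (hdu'c i))
      (fun x hx => by rw [hfZ x hx]; ring)
  have iQsum : Integrable (fun x => ((∑ i, u' i x * x i) * W x) ^ 2) volume := by
    apply ics _
    · apply Continuous.pow
      apply Continuous.mul _ hW.continuous
      exact continuous_finset_sum _ (fun i _ =>
        (hu'c i).mul (EuclideanSpace.proj (𝕜 := ℝ) i).continuous)
    · intro x hx
      have : ∀ i, u' i x * x i = 0 := fun i => by rw [hu'Z i x hx]; ring
      rw [Finset.sum_congr rfl (fun i _ => this i)]
      simp
  have iJ : Integrable (fun x => (f x * W x) * ((∑ i, u' i x * x i) * W x)) volume := by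
    apply ics _
    · apply Continuous.mul (hsm.continuous.mul hW.continuous)
      apply Continuous.mul _ hW.continuous
      exact continuous_finset_sum _ (fun i _ =>
        (hu'c i).mul (EuclideanSpace.proj (𝕜 := ℝ) i).continuous)
    · intro x hx
      rw [hfZ x hx]; ring
  have iA : Integrable (fun x => lap f x ^ 2) volume :=
    ics _ (hlapc.pow 2) (fun x hx => by rw [hlapZ x hx]; ring)
  have ilapP : Integrable (fun x => lap f x * (f x * W x)) volume :=
    ics _ (hlapc.mul (hsm.continuous.mul hW.continuous))
      (fun x hx => by rw [hlapZ x hx]; ring)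
  have if2dgW : ∀ i, Integrable (fun x => f x ^ 2 * fderiv ℝ (gW i) x (e i)) volume := fun i =>
    ics _ ((hsm.continuous.pow 2).mul (hd2Wc i))
      (fun x hx => by rw [hfZ x hx]; ring)
  have if2dV : ∀ i, Integrable (fun x => f x ^ 2 * fderiv ℝ (V i) x (e i)) volume := fun i =>
    ics _ ((hsm.continuous.pow 2).mul (hdVc i))
      (fun x hx => by rw [hfZ x hx]; ring)
  have ifu'V : ∀ i, Integrable (fun x => f x * u' i x * V i x) volume := fun i =>
    ics _ ((hsm.continuous.mul (hu'c i)).mul (hV i).continuous)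
      (fun x hx => by rw [hfZ x hx]; ring)
  -- R1 : I = -GG - T
  have hfW : ContDiff ℝ ∞ (fun x => f x * W x) := hsm.mul hW
  have hfWcs : HasCompactSupport (fun x => f x * W x) :=
    hcs _ (fun x hx => by rw [hfZ x hx]; ring)
  have hf2cs : HasCompactSupport (fun x => f x ^ 2) :=
    hcs _ (fun x hx => by rw [hfZ x hx]; ring)
  have hf2sm : ContDiff ℝ ∞ (fun x => f x ^ 2) := hsm.pow 2
  have hdfW : ∀ x, ∀ i, fderiv ℝ (fun y => f y * W y) x (e i)
      = u' i x * W x + f x * fderiv ℝ W x (e i) := by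
    intro x i
    rw [fderiv_fun_mul (hsm.differentiable h1 x) (hW.differentiable h1 x)]
    simp only [ContinuousLinearMap.add_apply, ContinuousLinearMap.smul_apply, smul_eq_mul,
      hu']
    ring
  have hR1 : I = -GG - T := by
    have step1 : (fun x => lap f x * (f x * W x))
        = fun x => ∑ i, (f x * W x) * fderiv ℝ (u' i) x (e i) := by
      funext x
      rw [hlapeq x, Finset.sum_mul]
      exact Finset.sum_congr rfl fun i _ => mul_comm _ _
    have step2 : I = ∑ i, ∫ x, (f x * W x) * fderiv ℝ (u' i) x (e i) := by
      rw [hIdef, step1, integral_finset_sum _ (fun i _ => iI i)]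
    have step3 : ∀ i, ∫ x, (f x * W x) * fderiv ℝ (u' i) x (e i)
        = -∫ x, fderiv ℝ (fun y => f y * W y) x (e i) * u' i x :=
      fun i => ibp _ (u' i) (e i) hfW (hu'sm i) hfWcs
    have step4 : ∀ i, (fun x => fderiv ℝ (fun y => f y * W y) x (e i) * u' i x)
        = fun x => (u' i x) ^ 2 * W x + f x * u' i x * fderiv ℝ W x (e i) := by
      intro i; funext x; rw [hdfW x i]; ring
    have step5 : ∀ i, ∫ x, fderiv ℝ (fun y => f y * W y) x (e i) * u' i x
        = (∫ x, (u' i x) ^ 2 * W x) + ∫ x, f x * u' i x * fderiv ℝ W x (e i) := by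
      intro i
      rw [step4 i, integral_add (iGG i) (iT i)]
    rw [step2]
    rw [Finset.sum_congr rfl (fun i _ => (step3 i))]
    rw [Finset.sum_congr rfl (fun i _ => congrArg Neg.neg (step5 i))]
    rw [hGGdef, hTdef, Finset.sum_neg_distrib, Finset.sum_add_distrib]
    ring
  -- R2 : T = (n-4) * B
  have hdsq : ∀ (x : EuclideanSpace ℝ (Fin n)) i, fderiv ℝ (fun y => f y ^ 2) x (e i)
      = 2 * (f x * u' i x) := by
    intro x i
    have hsq : (fun y : EuclideanSpace ℝ (Fin n) => f y ^ 2) = fun y => f y * f y := by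
      funext y; ring
    rw [hsq, fderiv_fun_mul (hsm.differentiable h1 x) (hsm.differentiable h1 x)]
    simp only [ContinuousLinearMap.add_apply, ContinuousLinearMap.smul_apply, smul_eq_mul, hu']
    ring
  have hR2 : T = ((n:ℝ) - 4) * B := by
    have P2 : (fun x => ∑ i, f x ^ 2 * fderiv ℝ (gW i) x (e i))
        = fun x => (8 - 2 * (n:ℝ)) * (f x * W x) ^ 2 := by
      funext x
      by_cases hx : x ∈ U
      · rw [← Finset.mul_sum, hsum2 x hx, hWU x hx, mul_inv]
        ring
      · simp [hfZU x hx]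
    have sumL : ∑ i, ∫ x, f x ^ 2 * fderiv ℝ (gW i) x (e i) = (8 - 2 * (n:ℝ)) * B := by
      rw [← integral_finset_sum _ (fun i _ => if2dgW i), P2,
        MeasureTheory.integral_const_mul, ← hBdef]
    have E2 : ∀ i, ∫ x, f x ^ 2 * fderiv ℝ (gW i) x (e i)
        = -∫ x, fderiv ℝ (fun y => f y ^ 2) x (e i) * gW i x :=
      fun i => ibp _ (gW i) (e i) hf2sm (hgW i) hf2cs
    have E2' : ∀ i, ∫ x, fderiv ℝ (fun y => f y ^ 2) x (e i) * gW i x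
        = 2 * ∫ x, f x * u' i x * fderiv ℝ W x (e i) := by
      intro i
      have hpt : (fun x => fderiv ℝ (fun y => f y ^ 2) x (e i) * gW i x)
          = fun x => 2 * (f x * u' i x * fderiv ℝ W x (e i)) := by
        funext x
        rw [hdsq x i]
        simp only [hgWdef]
        ring
      rw [hpt, MeasureTheory.integral_const_mul]
    have key : (8 - 2 * (n:ℝ)) * B = -2 * T := by
      rw [← sumL, Finset.sum_congr rfl (fun i _ => E2 i),
        Finset.sum_congr rfl (fun i _ => congrArg Neg.neg (E2' i)),
        hTdef, Finset.sum_neg_distrib, ← Finset.mul_sum]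
      ring
    linarith
  -- R3 : (n-4) * B = -2 * J
  have hR3 : ((n:ℝ) - 4) * B = -2 * J := by
    have PV : (fun x => ∑ i, f x ^ 2 * fderiv ℝ (V i) x (e i))
        = fun x => ((n:ℝ) - 4) * (f x * W x) ^ 2 := by
      funext x
      by_cases hx : x ∈ U
      · rw [← Finset.mul_sum, hsumV x hx, hWU x hx, mul_inv]
        ring
      · simp [hfZU x hx]
    have sumL : ∑ i, ∫ x, f x ^ 2 * fderiv ℝ (V i) x (e i) = ((n:ℝ) - 4) * B := by
      rw [← integral_finset_sum _ (fun i _ => if2dV i), PV,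
        MeasureTheory.integral_const_mul, ← hBdef]
    have E3 : ∀ i, ∫ x, f x ^ 2 * fderiv ℝ (V i) x (e i)
        = -∫ x, fderiv ℝ (fun y => f y ^ 2) x (e i) * V i x :=
      fun i => ibp _ (V i) (e i) hf2sm (hV i) hf2cs
    have E3' : ∀ i, ∫ x, fderiv ℝ (fun y => f y ^ 2) x (e i) * V i x
        = 2 * ∫ x, f x * u' i x * V i x := by
      intro i
      have hpt : (fun x => fderiv ℝ (fun y => f y ^ 2) x (e i) * V i x)
          = fun x => 2 * (f x * u' i x * V i x) := by
        funext x
        rw [hdsq x i]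
        ring
      rw [hpt, MeasureTheory.integral_const_mul]
    have hQpt : (fun x => ∑ i, f x * u' i x * V i x)
        = fun x => (f x * W x) * ((∑ i, u' i x * x i) * W x) := by
      funext x
      by_cases hx : x ∈ U
      · have hV1 : ∀ i, V i x = x i * (qq x * qq x)⁻¹ := by
          intro i; rw [hVdef]; simp only; rw [hχ1 x hx, one_mul]
        calc ∑ i, f x * u' i x * V i x
            = ∑ i, (f x * ((qq x)⁻¹ * (qq x)⁻¹)) * (u' i x * x i) :=
              Finset.sum_congr rfl fun i _ => by rw [hV1 i, mul_inv]; ring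
          _ = (f x * ((qq x)⁻¹ * (qq x)⁻¹)) * ∑ i, u' i x * x i := by
              rw [Finset.mul_sum]
          _ = (f x * W x) * ((∑ i, u' i x * x i) * W x) := by
              rw [hWU x hx]; ring
      · have hfx := hfZU x hx
        simp [hfx]
    have sumR : ∑ i, ∫ x, f x * u' i x * V i x = J := by
      rw [← integral_finset_sum _ (fun i _ => ifu'V i)]
      rw [hJdef, ← hQpt]
    calc ((n:ℝ) - 4) * B = ∑ i, ∫ x, f x ^ 2 * fderiv ℝ (V i) x (e i) := sumL.symm
      _ = ∑ i, -(2 * ∫ x, f x * u' i x * V i x) := by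
          exact Finset.sum_congr rfl (fun i _ => by rw [E3 i, E3' i])
      _ = -2 * ∑ i, ∫ x, f x * u' i x * V i x := by
          rw [Finset.sum_neg_distrib, ← Finset.mul_sum]; ring
      _ = -2 * J := by rw [sumR]
  -- R4 : ∫ Q^2 ≤ GG
  have hR4 : ∫ x, ((∑ i, u' i x * x i) * W x) ^ 2 ≤ GG := by
    have hle : ∀ x, ((∑ i, u' i x * x i) * W x) ^ 2 ≤ ∑ i, (u' i x) ^ 2 * W x := by
      intro x
      by_cases hx : x ∈ U
      · have hq : 0 < qq x := qq_pos (hUne x hx)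
        have hCS0 := Finset.sum_mul_sq_le_sq_mul_sq Finset.univ
          (fun i => u' i x) (fun i => x i)
        have hCS : (∑ i, u' i x * x i) ^ 2 ≤ (∑ i, (u' i x) ^ 2) * qq x := by
          rw [qq_eq_sum]; exact hCS0
        have hW' : W x = (qq x)⁻¹ := hWU x hx
        rw [hW']
        have hsum_rw : ∑ i, (u' i x) ^ 2 * (qq x)⁻¹
            = (∑ i, (u' i x) ^ 2) * (qq x)⁻¹ := (Finset.sum_mul _ _ _).symm
        rw [hsum_rw, mul_pow]
        calc (∑ i, u' i x * x i) ^ 2 * ((qq x)⁻¹) ^ 2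
            ≤ ((∑ i, (u' i x) ^ 2) * qq x) * ((qq x)⁻¹) ^ 2 := by
              apply mul_le_mul_of_nonneg_right hCS (by positivity)
          _ = (∑ i, (u' i x) ^ 2) * (qq x)⁻¹ := by
              field_simp
      · have hz : ∀ i, u' i x = 0 := fun i => hu'ZU i x hx
        have hzz : ∀ i, u' i x * x i = 0 := fun i => by rw [hz i]; ring
        rw [Finset.sum_congr rfl (fun i _ => hzz i),
          Finset.sum_congr rfl (fun i _ => by rw [hz i]; ring :
            ∀ i ∈ Finset.univ, (u' i x) ^ 2 * W x = 0)]
        simp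
    have isum : Integrable (fun x => ∑ i, (u' i x) ^ 2 * W x) volume :=
      integrable_finset_sum _ (fun i _ => iGG i)
    calc ∫ x, ((∑ i, u' i x * x i) * W x) ^ 2
        ≤ ∫ x, ∑ i, (u' i x) ^ 2 * W x := integral_mono iQsum isum hle
      _ = GG := by rw [integral_finset_sum _ (fun i _ => iGG i), hGGdef]
  -- Cauchy–Schwarz applications
  have hCS1 : J ^ 2 ≤ B * ∫ x, ((∑ i, u' i x * x i) * W x) ^ 2 := by
    rw [hJdef, hBdef]
    exact integral_cauchy_schwarz _ _ iB iQsum iJ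
  have hCS2 : I ^ 2 ≤ A * B := by
    rw [hIdef, hAdef, hBdef]
    exact integral_cauchy_schwarz _ _ iA iB ilapP
  -- nonnegativity
  have hBnn : 0 ≤ B := by
    rw [hBdef]; exact integral_nonneg fun x => sq_nonneg _
  have hGGnn : 0 ≤ GG := by
    rw [hGGdef]
    exact Finset.sum_nonneg fun i _ =>
      integral_nonneg fun x => mul_nonneg (sq_nonneg _) (hWnonneg x)
  have hAnn : 0 ≤ A := by
    rw [hAdef]; exact integral_nonneg fun x => sq_nonneg _
  have hQnn : 0 ≤ ∫ x, ((∑ i, u' i x * x i) * W x) ^ 2 :=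
    integral_nonneg fun x => sq_nonneg _
  -- the right-hand side integral equals B
  have hrhs : ∫ x, (f x) ^ 2 / ‖x‖ ^ 4 = B := by
    rw [hBdef]
    have hpt : (fun x => (f x) ^ 2 / ‖x‖ ^ 4) = fun x => (f x * W x) ^ 2 := by
      funext x
      by_cases hx : x ∈ U
      · have hq : qq x ≠ 0 := hqqne x hx
        rw [hWU x hx]
        have hn4 : ‖x‖ ^ 4 = qq x ^ 2 := by rw [qq]; ring
        rw [hn4]
        field_simp
      · rw [hfZU x hx]
        simp
    rw [hpt]
  -- final assembly
  rw [ge_iff_le, hrhs]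
  set N : ℝ := (n : ℝ) with hN
  have hN5 : (5:ℝ) ≤ N := by rw [hN]; exact_mod_cast hn
  rcases hBnn.eq_or_lt with hB0 | hBpos
  · rw [← hB0, mul_zero]
    exact hAnn
  · have hKey : (N - 4) ^ 2 * B ≤ 4 * GG := by
      have h4 : ((N - 4) * B) ^ 2 = 4 * J ^ 2 := by
        rw [hR3]; ring
      have h5 : 4 * J ^ 2 ≤ 4 * (B * GG) := by
        have := hCS1.trans (mul_le_mul_of_nonneg_left hR4 hBnn)
        linarith
      have h6 : ((N - 4) * B) ^ 2 ≤ 4 * (B * GG) := by rw [h4]; exact h5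
      nlinarith [hBpos]
    have hInegI : -I = GG + (N - 4) * B := by
      rw [hR1, hR2]; ring
    have hc4 : 0 ≤ N * (N - 4) / 4 := by nlinarith
    have hIlb : N * (N - 4) / 4 * B ≤ -I := by
      rw [hInegI]
      nlinarith [hBpos.le]
    have hIsq : (N * (N - 4) / 4 * B) ^ 2 ≤ I ^ 2 := by
      have h7 : 0 ≤ N * (N - 4) / 4 * B := mul_nonneg hc4 hBnn
      nlinarith [hIlb]
    have : (N * (N - 4) / 4) ^ 2 * B ^ 2 ≤ A * B := by
      calc (N * (N - 4) / 4) ^ 2 * B ^ 2 = (N * (N - 4) / 4 * B) ^ 2 := by ring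
        _ ≤ I ^ 2 := hIsq
        _ ≤ A * B := hCS2
    nlinarith [hBpos]
end

section
/- For 5 ≤ n ≤ 7 and f ∈ C_0^∞(ℝⁿ \ {0}): ∫_{ℝⁿ} |Δf(x)|² dⁿx ≥ 4(n-4) ∫_{ℝⁿ} |x|^{-2} |∇f(x)|² dⁿx. -/
open MeasureTheory Real Filter Set RealInnerProductSpace

namespace Rellich
set_option linter.unusedSectionVars false


noncomputable def ee (n : ℕ) (i : Fin n) : EuclideanSpace ℝ (Fin n) :=
  EuclideanSpace.single i 1

noncomputable def Nf (n : ℕ) (x : EuclideanSpace ℝ (Fin n)) : ℝ := ∑ i, x i ^ 2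

variable {n : ℕ}

lemma nf_eq (x : EuclideanSpace ℝ (Fin n)) : Nf n x = ‖x‖ ^ 2 := by
  rw [EuclideanSpace.norm_eq, Real.sq_sqrt (by positivity)]
  simp [Nf, sq_abs]

lemma nf_nonneg (x : EuclideanSpace ℝ (Fin n)) : 0 ≤ Nf n x := by
  rw [nf_eq]; positivity

lemma nf_pos {x : EuclideanSpace ℝ (Fin n)} (hx : x ≠ 0) : 0 < Nf n x := by
  rw [nf_eq]
  have : ‖x‖ ≠ 0 := norm_ne_zero_iff.2 hx
  positivity

lemma contDiff_nf : ContDiff ℝ (⊤:ℕ∞) (Nf n) :=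
  ContDiff.sum fun i _ => (EuclideanSpace.proj (𝕜 := ℝ) i : EuclideanSpace ℝ (Fin n) →L[ℝ] ℝ).contDiff.pow 2

lemma hasFDerivAt_nf (x : EuclideanSpace ℝ (Fin n)) :
    HasFDerivAt (Nf n) (∑ i, (2 * x i) • (EuclideanSpace.proj i
      : EuclideanSpace ℝ (Fin n) →L[ℝ] ℝ)) x := by
  have : ∀ i : Fin n, HasFDerivAt (fun y : EuclideanSpace ℝ (Fin n) => y i ^ 2)
      ((2 * x i) • (EuclideanSpace.proj i : EuclideanSpace ℝ (Fin n) →L[ℝ] ℝ)) x := by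
    intro i
    have h := ((EuclideanSpace.proj (𝕜 := ℝ) i).hasFDerivAt (x := x)).mul
      ((EuclideanSpace.proj (𝕜 := ℝ) i).hasFDerivAt (x := x))
    have e : (fun y : EuclideanSpace ℝ (Fin n) => y i ^ 2) = fun y =>
        (EuclideanSpace.proj (𝕜 := ℝ) i y) * (EuclideanSpace.proj (𝕜 := ℝ) i y) := by
      funext y; simp [pow_two]
    have e2 : (2 * x i) • (EuclideanSpace.proj i : EuclideanSpace ℝ (Fin n) →L[ℝ] ℝ)
        = x i • EuclideanSpace.proj i + x i • EuclideanSpace.proj i := by rw [two_mul, add_smul]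
    rw [e, e2]; exact h
  exact HasFDerivAt.fun_sum fun i _ => this i

lemma ee_apply (i j : Fin n) : (ee n i) j = if j = i then 1 else 0 := by
  simp [ee, EuclideanSpace.single_apply]

lemma fderiv_nf (x : EuclideanSpace ℝ (Fin n)) (j : Fin n) :
    fderiv ℝ (Nf n) x (ee n j) = 2 * x j := by
  rw [(hasFDerivAt_nf x).fderiv]
  simp [ContinuousLinearMap.sum_apply, ee_apply, Finset.sum_ite_eq, mul_ite]



noncomputable def chi (n : ℕ) (a b : ℝ) (x : EuclideanSpace ℝ (Fin n)) : ℝ :=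
  Real.smoothTransition ((Nf n x - a) / (b - a))
noncomputable def Wf (n : ℕ) (a b : ℝ) (x : EuclideanSpace ℝ (Fin n)) : ℝ :=
  chi n a b x * (Nf n x)⁻¹
noncomputable def Pf (n : ℕ) (a b : ℝ) (i : Fin n) (x : EuclideanSpace ℝ (Fin n)) : ℝ :=
  chi n a b x * (x i * (Nf n x)⁻¹)

variable {n : ℕ} {a b : ℝ}



lemma sum_proj_apply (x : EuclideanSpace ℝ (Fin n)) (j : Fin n) :
    (∑ i, (2 * x i) • (EuclideanSpace.proj i : EuclideanSpace ℝ (Fin n) →L[ℝ] ℝ)) (ee n j)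
      = 2 * x j := by
  rw [ContinuousLinearMap.sum_apply]
  have : ∀ i : Fin n, ((2 * x i) • (EuclideanSpace.proj i
      : EuclideanSpace ℝ (Fin n) →L[ℝ] ℝ)) (ee n j) = if i = j then 2 * x j else 0 := by
    intro i
    rw [ContinuousLinearMap.smul_apply]
    simp only [PiLp.proj_apply, smul_eq_mul, ee_apply]
    rcases eq_or_ne i j with rfl | hij
    · simp
    · simp [hij, Ne.symm hij]
  rw [Finset.sum_congr rfl fun i _ => this i]
  simp

section weights
variable (ha : 0 < a) (hab : a < b)

lemma chi_contDiff : ContDiff ℝ (⊤:ℕ∞) (chi n a b) :=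
  Real.smoothTransition.contDiff.comp ((contDiff_nf.sub contDiff_const).div_const _)

lemma chi_nonneg (x : EuclideanSpace ℝ (Fin n)) : 0 ≤ chi n a b x :=
  Real.smoothTransition.nonneg _

include hab in
lemma chi_one {x : EuclideanSpace ℝ (Fin n)} (hx : b ≤ Nf n x) : chi n a b x = 1 :=
  Real.smoothTransition.one_of_one_le <| (one_le_div (by linarith)).2 (by linarith)

include hab in
lemma chi_zero {x : EuclideanSpace ℝ (Fin n)} (hx : Nf n x ≤ a) : chi n a b x = 0 :=
  Real.smoothTransition.zero_of_nonpos <|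
    div_nonpos_of_nonpos_of_nonneg (by linarith) (by linarith)

include hab in
lemma w_eventually {x : EuclideanSpace ℝ (Fin n)} (hx : b < Nf n x) :
    Wf n a b =ᶠ[nhds x] fun y => (Nf n y)⁻¹ := by
  have hopen : IsOpen {y : EuclideanSpace ℝ (Fin n) | b < Nf n y} :=
    isOpen_lt continuous_const contDiff_nf.continuous
  filter_upwards [hopen.mem_nhds hx] with y hy
  simp [Wf, chi_one hab (le_of_lt hy)]

include hab in
lemma p_eventually {x : EuclideanSpace ℝ (Fin n)} (hx : b < Nf n x) (i : Fin n) :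
    Pf n a b i =ᶠ[nhds x] fun y => y i * (Nf n y)⁻¹ := by
  have hopen : IsOpen {y : EuclideanSpace ℝ (Fin n) | b < Nf n y} :=
    isOpen_lt continuous_const contDiff_nf.continuous
  filter_upwards [hopen.mem_nhds hx] with y hy
  simp [Pf, chi_one hab (le_of_lt hy)]

include ha hab in
lemma w_contDiff : ContDiff ℝ (⊤:ℕ∞) (Wf n a b) := by
  rw [contDiff_iff_contDiffAt]
  intro x
  rcases eq_or_ne x 0 with rfl | hx
  · have h0 : Nf n (0 : EuclideanSpace ℝ (Fin n)) = 0 := by simp [Nf]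
    have hopen : IsOpen {y : EuclideanSpace ℝ (Fin n) | Nf n y < a} :=
      isOpen_lt contDiff_nf.continuous continuous_const
    have hev : Wf n a b =ᶠ[nhds (0 : EuclideanSpace ℝ (Fin n))] fun _ => (0:ℝ) := by
      filter_upwards [hopen.mem_nhds (by simpa [h0] using ha)] with y hy
      simp [Wf, chi_zero hab (le_of_lt hy)]
    exact (contDiffAt_const (c := (0:ℝ))).congr_of_eventuallyEq hev
  · exact ((chi_contDiff (n := n) (a := a) (b := b)).contDiffAt).mul
      ((contDiff_nf.contDiffAt).inv (nf_pos hx).ne')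

include ha hab in
lemma p_contDiff (i : Fin n) : ContDiff ℝ (⊤:ℕ∞) (Pf n a b i) := by
  rw [contDiff_iff_contDiffAt]
  intro x
  rcases eq_or_ne x 0 with rfl | hx
  · have h0 : Nf n (0 : EuclideanSpace ℝ (Fin n)) = 0 := by simp [Nf]
    have hopen : IsOpen {y : EuclideanSpace ℝ (Fin n) | Nf n y < a} :=
      isOpen_lt contDiff_nf.continuous continuous_const
    have hev : Pf n a b i =ᶠ[nhds (0 : EuclideanSpace ℝ (Fin n))] fun _ => (0:ℝ) := by
      filter_upwards [hopen.mem_nhds (by simpa [h0] using ha)] with y hy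
      simp [Pf, chi_zero hab (le_of_lt hy)]
    exact (contDiffAt_const (c := (0:ℝ))).congr_of_eventuallyEq hev
  · exact ((chi_contDiff (n := n) (a := a) (b := b)).contDiffAt).mul
      (((EuclideanSpace.proj i).contDiff.contDiffAt).mul
        ((contDiff_nf.contDiffAt).inv (nf_pos hx).ne'))

lemma hasFDerivAt_inv_nf {x : EuclideanSpace ℝ (Fin n)} (hx : x ≠ 0) :
    HasFDerivAt (fun y => (Nf n y)⁻¹)
      ((-(Nf n x ^ 2)⁻¹) • ∑ i, (2 * x i) • (EuclideanSpace.proj i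
        : EuclideanSpace ℝ (Fin n) →L[ℝ] ℝ)) x :=
  (hasDerivAt_inv (nf_pos hx).ne').comp_hasFDerivAt x (hasFDerivAt_nf x)

include hab in
lemma fderiv_w {x : EuclideanSpace ℝ (Fin n)} (hb : 0 < b) (hx : b < Nf n x) (j : Fin n) :
    fderiv ℝ (Wf n a b) x (ee n j) = -(2 * x j) / (Nf n x) ^ 2 := by
  have hx0 : x ≠ 0 := by
    rintro rfl; simp [Nf] at hx; linarith
  rw [Filter.EventuallyEq.fderiv_eq (w_eventually hab hx),
    (hasFDerivAt_inv_nf hx0).fderiv, ContinuousLinearMap.smul_apply, sum_proj_apply]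
  simp [div_eq_mul_inv]
  ring

include hab in
lemma fderiv_p {x : EuclideanSpace ℝ (Fin n)} (hb : 0 < b) (hx : b < Nf n x) (i j : Fin n) :
    fderiv ℝ (Pf n a b i) x (ee n j) =
      (if i = j then (Nf n x)⁻¹ else 0) - 2 * x i * x j / (Nf n x) ^ 2 := by
  have hx0 : x ≠ 0 := by
    rintro rfl; simp [Nf] at hx; linarith
  have hmul : HasFDerivAt (fun y : EuclideanSpace ℝ (Fin n) => y i * (Nf n y)⁻¹)
      ((x i) • ((-(Nf n x ^ 2)⁻¹) • ∑ k, (2 * x k) • (EuclideanSpace.proj k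
        : EuclideanSpace ℝ (Fin n) →L[ℝ] ℝ)) + (Nf n x)⁻¹ • (EuclideanSpace.proj i
        : EuclideanSpace ℝ (Fin n) →L[ℝ] ℝ)) x :=
    ((EuclideanSpace.proj (𝕜 := ℝ) i).hasFDerivAt (x := x)).mul (hasFDerivAt_inv_nf hx0)
  rw [Filter.EventuallyEq.fderiv_eq (p_eventually hab hx i), hmul.fderiv,
    ContinuousLinearMap.add_apply, ContinuousLinearMap.smul_apply,
    ContinuousLinearMap.smul_apply, sum_proj_apply, ContinuousLinearMap.smul_apply]
  simp only [PiLp.proj_apply, smul_eq_mul, ee_apply]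
  rcases eq_or_ne i j with rfl | hij
  · simp only [if_pos rfl, ↓reduceIte]
    field_simp
    ring
  · simp only [if_neg hij, if_neg (Ne.symm hij)]
    field_simp
    ring

end weights


noncomputable def uu (n : ℕ) (f : EuclideanSpace ℝ (Fin n) → ℝ) (i : Fin n)
    (x : EuclideanSpace ℝ (Fin n)) : ℝ := fderiv ℝ f x (ee n i)

variable {f : EuclideanSpace ℝ (Fin n) → ℝ}

section deriv
variable (hf : ContDiff ℝ (⊤:ℕ∞) f)

include hf in
lemma fderiv_contDiff : ContDiff ℝ (⊤:ℕ∞) (fderiv ℝ f) := by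
  apply hf.fderiv_right
  exact le_of_eq (by simp)

include hf in
lemma uu_contDiff (i : Fin n) : ContDiff ℝ (⊤:ℕ∞) (uu n f i) :=
  (ContinuousLinearMap.apply ℝ ℝ (ee n i)).contDiff.comp (fderiv_contDiff hf)

lemma uu_zero {x : EuclideanSpace ℝ (Fin n)} (hx : x ∉ tsupport f) (i : Fin n) :
    uu n f i x = 0 := by
  unfold uu
  rw [fderiv_of_notMem_tsupport _ hx]
  simp

lemma tsupport_uu (i : Fin n) : tsupport (uu n f i) ⊆ tsupport f := by
  apply closure_minimal _ (isClosed_tsupport f)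
  intro x hx
  by_contra hxn
  exact hx (uu_zero hxn i)

lemma fderiv_uu_zero {x : EuclideanSpace ℝ (Fin n)} (hx : x ∉ tsupport f) (i : Fin n) :
    fderiv ℝ (uu n f i) x = 0 :=
  fderiv_of_notMem_tsupport _ (fun h => hx (tsupport_uu i h))

include hf in
lemma fderiv_uu (x : EuclideanSpace ℝ (Fin n)) (i : Fin n) :
    fderiv ℝ (uu n f i) x = (fderiv ℝ (fderiv ℝ f) x).flip (ee n i) := by
  have hc : DifferentiableAt ℝ (fderiv ℝ f) x :=
    (fderiv_contDiff hf).differentiable (by simp) x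
  have := fderiv_clm_apply (𝕜 := ℝ) (c := fderiv ℝ f)
    (u := fun _ => ee n i) (x := x) hc (differentiableAt_const _)
  unfold uu
  rw [this]
  simp

include hf in
lemma duu_symm (x : EuclideanSpace ℝ (Fin n)) (i j : Fin n) :
    fderiv ℝ (uu n f i) x (ee n j) = fderiv ℝ (uu n f j) x (ee n i) := by
  rw [fderiv_uu hf, fderiv_uu hf]
  simp only [ContinuousLinearMap.flip_apply]
  exact second_derivative_symmetric
    (f' := fderiv ℝ f)
    (fun y => ((hf.differentiable (by simp)) y).hasFDerivAt)
    (((fderiv_contDiff hf).differentiable (by simp) x).hasFDerivAt) _ _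

include hf in
lemma lap_eq (x : EuclideanSpace ℝ (Fin n)) :
    lap f x = ∑ i, fderiv ℝ (uu n f i) x (ee n i) := by
  unfold lap
  refine Finset.sum_congr rfl fun i _ => ?_
  rw [fderiv_uu hf]
  rfl

include hf in
lemma grad_eq (x : EuclideanSpace ℝ (Fin n)) :
    ‖gradient f x‖ ^ 2 = ∑ i, uu n f i x ^ 2 := by
  have hcoord : ∀ i, gradient f x i = uu n f i x := by
    intro i
    have h1 : (inner ℝ (gradient f x) (ee n i) : ℝ) = fderiv ℝ f x (ee n i) := by
      unfold gradient
      exact InnerProductSpace.toDual_symm_apply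
    have h2 : (inner ℝ (gradient f x) (ee n i) : ℝ) = gradient f x i := by
      rw [ee, EuclideanSpace.inner_single_right]; simp
    rw [← h2, h1]; rfl
  rw [EuclideanSpace.norm_eq, Real.sq_sqrt (by positivity)]
  refine Finset.sum_congr rfl fun i _ => ?_
  rw [hcoord i]
  simp [sq_abs]

end deriv

-- appended to main.lean inside namespace Rellich
noncomputable def GG (n : ℕ) (f : EuclideanSpace ℝ (Fin n) → ℝ)
    (x : EuclideanSpace ℝ (Fin n)) : ℝ := ∑ i, uu n f i x ^ 2
noncomputable def HH (n : ℕ) (f : EuclideanSpace ℝ (Fin n) → ℝ) (a b : ℝ)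
    (x : EuclideanSpace ℝ (Fin n)) : ℝ := ∑ i, uu n f i x * Pf n a b i x

section main
variable {f : EuclideanSpace ℝ (Fin n) → ℝ} {a b : ℝ}

lemma dapply_contDiff {g : EuclideanSpace ℝ (Fin n) → ℝ} (hg : ContDiff ℝ (⊤:ℕ∞) g)
    (v : EuclideanSpace ℝ (Fin n)) : ContDiff ℝ (⊤:ℕ∞) (fun x => fderiv ℝ g x v) :=
  (ContinuousLinearMap.apply ℝ ℝ v).contDiff.comp (hg.fderiv_right (le_of_eq (by simp)))

variable (hf : ContDiff ℝ (⊤:ℕ∞) f) (hcs : HasCompactSupport f)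
variable (ha : 0 < a) (hab : a < b)

include hf ha hab in
lemma gg_contDiff : ContDiff ℝ (⊤:ℕ∞) (GG n f) :=
  ContDiff.sum fun i _ => (uu_contDiff hf i).pow 2

include hf ha hab in
lemma hh_contDiff : ContDiff ℝ (⊤:ℕ∞) (HH n f a b) :=
  ContDiff.sum fun i _ => (uu_contDiff hf i).mul (p_contDiff ha hab i)

lemma gg_zero {x : EuclideanSpace ℝ (Fin n)} (hx : x ∉ tsupport f) : GG n f x = 0 := by
  unfold GG; simp [uu_zero hx]

lemma hh_zero {x : EuclideanSpace ℝ (Fin n)} (hx : x ∉ tsupport f) : HH n f a b x = 0 := by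
  unfold HH; simp [uu_zero hx]

include hcs in
lemma int_helper (g : EuclideanSpace ℝ (Fin n) → ℝ) (hg : Continuous g)
    (hv : ∀ x ∉ tsupport f, g x = 0) : Integrable g :=
  hg.integrable_of_hasCompactSupport (HasCompactSupport.intro hcs hv)

include hcs in
lemma ibp (g1 g2 : EuclideanSpace ℝ (Fin n) → ℝ) (h1 : ContDiff ℝ (⊤:ℕ∞) g1)
    (h2 : ContDiff ℝ (⊤:ℕ∞) g2) (v : EuclideanSpace ℝ (Fin n))
    (hz : ∀ x ∉ tsupport f, g2 x = 0) :
    ∫ x, g1 x * fderiv ℝ g2 x v = - ∫ x, fderiv ℝ g1 x v * g2 x := by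
  have hts : tsupport g2 ⊆ tsupport f := by
    apply closure_minimal _ (isClosed_tsupport f)
    intro x hx
    by_contra hxn
    exact hx (hz x hxn)
  have hz2 : ∀ x ∉ tsupport f, fderiv ℝ g2 x = 0 := fun x hx =>
    fderiv_of_notMem_tsupport _ (fun h => hx (hts h))
  apply integral_mul_fderiv_eq_neg_fderiv_mul_of_integrable
  · exact int_helper hcs _ ((dapply_contDiff h1 v).continuous.mul h2.continuous)
      (fun x hx => by rw [hz x hx, mul_zero])
  · exact int_helper hcs _ (h1.continuous.mul (dapply_contDiff h2 v).continuous)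
      (fun x hx => by rw [hz2 x hx]; simp)
  · exact int_helper hcs _ (h1.continuous.mul h2.continuous)
      (fun x hx => by rw [hz x hx, mul_zero])
  · exact fun x _ => h1.differentiable (by simp) x
  · exact fun x _ => h2.differentiable (by simp) x

lemma alg1 (u v : Fin n → ℝ) (c : ℝ) :
    ∑ j, ∑ i, u j * u i * ((if i = j then c else 0) - 2 * v i * v j * c ^ 2)
      = (∑ i, u i ^ 2) * c - 2 * (∑ i, u i * (v i * c)) ^ 2 := by
  have key : ∀ j, ∑ i, u j * u i * ((if i = j then c else 0) - 2 * v i * v j * c ^ 2)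
      = u j ^ 2 * c - (u j * v j) * ((2 * c ^ 2) * (∑ i, u i * v i)) := by
    intro j
    have e1 : ∀ i, u j * u i * ((if i = j then c else 0) - 2 * v i * v j * c ^ 2)
        = (if i = j then u j * u i * c else 0) - (u i * v i) * ((u j * v j) * (2 * c ^ 2)) := by
      intro i; split_ifs with h <;> ring
    rw [Finset.sum_congr rfl fun i _ => e1 i, Finset.sum_sub_distrib, ← Finset.sum_mul,
      Finset.sum_ite_eq' Finset.univ j]
    simp only [Finset.mem_univ, if_pos]
    ring
  rw [Finset.sum_congr rfl fun j _ => key j, Finset.sum_sub_distrib]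
  have e2 : ∑ i, u i * (v i * c) = (∑ i, u i * v i) * c := by
    rw [Finset.sum_mul]; exact Finset.sum_congr rfl fun i _ => by ring
  have e5 : ∑ j, u j ^ 2 * c = (∑ i, u i ^ 2) * c := (Finset.sum_mul _ _ _).symm
  have e6 : ∑ j, (u j * v j) * ((2 * c ^ 2) * (∑ i, u i * v i))
      = (∑ j, u j * v j) * ((2 * c ^ 2) * (∑ i, u i * v i)) := (Finset.sum_mul _ _ _).symm
  rw [e5, e6, e2]
  ring

end main

section main2
variable {f : EuclideanSpace ℝ (Fin n) → ℝ} {a b : ℝ}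
variable (hf : ContDiff ℝ (⊤:ℕ∞) f) (hcs : HasCompactSupport f)
variable (ha : 0 < a) (hab : a < b) (hb : 0 < b)
variable (hbK : ∀ x ∈ tsupport f, b < Nf n x)

include hf in
lemma fderiv_gg (x : EuclideanSpace ℝ (Fin n)) (i : Fin n) :
    fderiv ℝ (GG n f) x (ee n i) = ∑ j, 2 * uu n f j x * fderiv ℝ (uu n f j) x (ee n i) := by
  have hdiff : ∀ j : Fin n, DifferentiableAt ℝ (fun y => uu n f j y * uu n f j y) x :=
    fun j => (((uu_contDiff hf j).differentiable (by simp)) x).mul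
      (((uu_contDiff hf j).differentiable (by simp)) x)
  have e0 : GG n f = fun y => ∑ j, uu n f j y * uu n f j y := by
    funext y; unfold GG; exact Finset.sum_congr rfl fun j _ => sq (uu n f j y)
  rw [e0, fderiv_fun_sum (fun j _ => hdiff j)]
  rw [ContinuousLinearMap.sum_apply]
  refine Finset.sum_congr rfl fun j _ => ?_
  rw [fderiv_fun_mul (((uu_contDiff hf j).differentiable (by simp)) x)
    (((uu_contDiff hf j).differentiable (by simp)) x)]
  simp only [ContinuousLinearMap.add_apply, ContinuousLinearMap.coe_smul', Pi.smul_apply,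
    smul_eq_mul]
  ring

include hf ha hab in
lemma fderiv_hh (x : EuclideanSpace ℝ (Fin n)) (j : Fin n) :
    fderiv ℝ (HH n f a b) x (ee n j)
      = ∑ i, (uu n f i x * fderiv ℝ (Pf n a b i) x (ee n j)
          + Pf n a b i x * fderiv ℝ (uu n f i) x (ee n j)) := by
  have hdiff : ∀ i : Fin n, DifferentiableAt ℝ (fun y => uu n f i y * Pf n a b i y) x :=
    fun i => (((uu_contDiff hf i).differentiable (by simp)) x).mul
      (((p_contDiff ha hab i).differentiable (by simp)) x)
  have e0 : HH n f a b = fun y => ∑ i, uu n f i y * Pf n a b i y := rfl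
  rw [e0, fderiv_fun_sum (fun i _ => hdiff i), ContinuousLinearMap.sum_apply]
  refine Finset.sum_congr rfl fun i _ => ?_
  rw [fderiv_fun_mul (((uu_contDiff hf i).differentiable (by simp)) x)
    (((p_contDiff ha hab i).differentiable (by simp)) x)]
  simp only [ContinuousLinearMap.add_apply, ContinuousLinearMap.coe_smul', Pi.smul_apply,
    smul_eq_mul]

include hab hb hbK in
lemma pw_t2 (x : EuclideanSpace ℝ (Fin n)) :
    ∑ j, ∑ i, uu n f i x * fderiv ℝ (Pf n a b i) x (ee n j) * uu n f j x
      = GG n f x * Wf n a b x - 2 * HH n f a b x ^ 2 := by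
  by_cases hx : x ∈ tsupport f
  · have hbx := hbK x hx
    have hchi : chi n a b x = 1 := chi_one hab hbx.le
    have hN : (0:ℝ) < Nf n x := hb.trans hbx
    have hDP : ∀ i j : Fin n, fderiv ℝ (Pf n a b i) x (ee n j)
        = (if i = j then (Nf n x)⁻¹ else 0) - 2 * x i * x j * ((Nf n x)⁻¹) ^ 2 := by
      intro i j
      rw [fderiv_p hab hb hbx i j, div_eq_mul_inv, ← inv_pow]
    have e1 : ∀ j i : Fin n, uu n f i x * fderiv ℝ (Pf n a b i) x (ee n j) * uu n f j x
        = uu n f j x * uu n f i x * ((if i = j then (Nf n x)⁻¹ else 0)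
            - 2 * x i * x j * ((Nf n x)⁻¹) ^ 2) := by
      intro j i; rw [hDP i j]; ring
    rw [Finset.sum_congr rfl fun j _ => Finset.sum_congr rfl fun i _ => e1 j i,
      alg1 (fun i => uu n f i x) (fun i => x i) ((Nf n x)⁻¹)]
    have e2 : ∑ i, uu n f i x * (x i * (Nf n x)⁻¹) = HH n f a b x :=
      Finset.sum_congr rfl fun i _ => by rw [Pf.eq_def, hchi, one_mul]
    have e3 : Wf n a b x = (Nf n x)⁻¹ := by rw [Wf.eq_def, hchi, one_mul]
    rw [e2, e3]
    rfl
  · have hz : ∀ i, uu n f i x = 0 := fun i => uu_zero hx i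
    simp [hz, gg_zero hx, hh_zero (a := a) (b := b) hx]

include hab hb hbK in
lemma pw_t1 (x : EuclideanSpace ℝ (Fin n)) :
    (∑ i, fderiv ℝ (Pf n a b i) x (ee n i)) * GG n f x
      = ((n:ℝ) - 2) * (GG n f x * Wf n a b x) := by
  by_cases hx : x ∈ tsupport f
  · have hbx := hbK x hx
    have hchi : chi n a b x = 1 := chi_one hab hbx.le
    have hN : (0:ℝ) < Nf n x := hb.trans hbx
    have e3 : Wf n a b x = (Nf n x)⁻¹ := by rw [Wf.eq_def, hchi, one_mul]
    have hDP : ∀ i : Fin n, fderiv ℝ (Pf n a b i) x (ee n i)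
        = (Nf n x)⁻¹ - x i ^ 2 * (2 * ((Nf n x)⁻¹) ^ 2) := by
      intro i
      rw [fderiv_p hab hb hbx i i, if_pos rfl, div_eq_mul_inv, ← inv_pow]
      ring
    rw [Finset.sum_congr rfl fun i _ => hDP i, Finset.sum_sub_distrib, ← Finset.sum_mul]
    have hNf : (∑ i, x i ^ 2) = Nf n x := rfl
    rw [hNf, Finset.sum_const, Finset.card_univ, Fintype.card_fin, e3]
    have h2 : Nf n x * (2 * ((Nf n x)⁻¹) ^ 2) = 2 * (Nf n x)⁻¹ := by
      field_simp
    rw [nsmul_eq_mul, h2]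
    ring
  · simp [gg_zero hx]

omit hb hbK in
include hf hab in
lemma pw_rhs (x : EuclideanSpace ℝ (Fin n)) (hbK : ∀ x ∈ tsupport f, b < Nf n x) :
    ‖gradient f x‖ ^ 2 / ‖x‖ ^ 2 = GG n f x * Wf n a b x := by
  rw [grad_eq hf]
  by_cases hx : x ∈ tsupport f
  · have hbx := hbK x hx
    have hchi : chi n a b x = 1 := chi_one hab hbx.le
    have e3 : Wf n a b x = (Nf n x)⁻¹ := by rw [Wf.eq_def, hchi, one_mul]
    rw [e3, ← nf_eq, div_eq_mul_inv]
    rfl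
  · have hz : ∀ i, uu n f i x = 0 := fun i => uu_zero hx i
    have : GG n f x = 0 := gg_zero hx
    rw [GG.eq_def] at this
    rw [this]
    simp [gg_zero hx]

end main2

section main3
variable {f : EuclideanSpace ℝ (Fin n) → ℝ} {a b : ℝ}
variable (hf : ContDiff ℝ (⊤:ℕ∞) f) (hcs : HasCompactSupport f)
variable (ha : 0 < a) (hab : a < b) (hb : 0 < b)
variable (hbK : ∀ x ∈ tsupport f, b < Nf n x)

include hf hcs ha hab hb hbK in
lemma key_identity :
    ∫ x, lap f x * HH n f a b x
      = (((n:ℝ) - 4) / 2) * (∫ x, GG n f x * Wf n a b x)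
        + 2 * ∫ x, HH n f a b x ^ 2 := by
  have cu : ∀ i, Continuous (uu n f i) := fun i => (uu_contDiff hf i).continuous
  have cdu : ∀ i j, Continuous (fun x => fderiv ℝ (uu n f i) x (ee n j)) :=
    fun i j => (dapply_contDiff (uu_contDiff hf i) _).continuous
  have cP : ∀ i, Continuous (Pf n a b i) := fun i => (p_contDiff ha hab i).continuous
  have cdP : ∀ i j, Continuous (fun x => fderiv ℝ (Pf n a b i) x (ee n j)) :=
    fun i j => (dapply_contDiff (p_contDiff ha hab i) _).continuous
  have cH : Continuous (HH n f a b) := (hh_contDiff hf ha hab).continuous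
  have cG : Continuous (GG n f) := (gg_contDiff hf ha hab).continuous
  have cW : Continuous (Wf n a b) := (w_contDiff ha hab).continuous
  have hzu : ∀ (j : Fin n) x, x ∉ tsupport f → uu n f j x = 0 := fun j x hx => uu_zero hx j
  have hzH : ∀ x ∉ tsupport f, HH n f a b x = 0 := fun x hx => hh_zero hx
  have hzG : ∀ x ∉ tsupport f, GG n f x = 0 := fun x hx => gg_zero hx
  have int1 : ∀ j : Fin n, Integrable
      (fun x => ∑ i, uu n f i x * fderiv ℝ (Pf n a b i) x (ee n j) * uu n f j x) :=
    fun j => int_helper hcs _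
      (continuous_finset_sum _ fun i _ => ((cu i).mul (cdP i j)).mul (cu j))
      (fun x hx => Finset.sum_eq_zero fun i _ => by rw [hzu j x hx, mul_zero])
  have int2 : ∀ j : Fin n, Integrable
      (fun x => ∑ i, Pf n a b i x * fderiv ℝ (uu n f i) x (ee n j) * uu n f j x) :=
    fun j => int_helper hcs _
      (continuous_finset_sum _ fun i _ => ((cP i).mul (cdu i j)).mul (cu j))
      (fun x hx => Finset.sum_eq_zero fun i _ => by rw [hzu j x hx, mul_zero])
  have int3 : ∀ i j : Fin n, Integrable
      (fun x => Pf n a b i x * fderiv ℝ (uu n f i) x (ee n j) * uu n f j x) :=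
    fun i j => int_helper hcs _ (((cP i).mul (cdu i j)).mul (cu j))
      (fun x hx => by rw [hzu j x hx, mul_zero])
  have int4 : ∀ i : Fin n, Integrable
      (fun x => fderiv ℝ (Pf n a b i) x (ee n i) * GG n f x) :=
    fun i => int_helper hcs _ ((cdP i i).mul cG) (fun x hx => by rw [hzG x hx, mul_zero])
  have intGW : Integrable (fun x => GG n f x * Wf n a b x) :=
    int_helper hcs _ (cG.mul cW) (fun x hx => by rw [hzG x hx, zero_mul])
  have intHH2 : Integrable (fun x => HH n f a b x ^ 2) :=
    int_helper hcs _ (cH.pow 2) (fun x hx => by rw [hzH x hx]; ring)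
  -- Step 1 : expand the Laplacian
  have eA1 : (fun x => lap f x * HH n f a b x)
      = (fun x => ∑ j, HH n f a b x * fderiv ℝ (uu n f j) x (ee n j)) := by
    funext x
    rw [lap_eq hf x, Finset.sum_mul]
    exact Finset.sum_congr rfl fun j _ => mul_comm _ _
  rw [eA1, integral_finset_sum _ (f := fun j x => HH n f a b x * fderiv ℝ (uu n f j) x (ee n j)) (fun j _ => int_helper hcs _ (cH.mul (cdu j j))
    (fun x hx => by rw [hzH x hx, zero_mul]))]
  -- Step 2 : integrate by parts in each direction j
  have eA2 : ∀ j : Fin n, ∫ x, HH n f a b x * fderiv ℝ (uu n f j) x (ee n j)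
      = - ∫ x, fderiv ℝ (HH n f a b) x (ee n j) * uu n f j x :=
    fun j => ibp hcs _ _ (hh_contDiff hf ha hab) (uu_contDiff hf j) (ee n j)
      (fun x hx => hzu j x hx)
  rw [Finset.sum_congr rfl fun j _ => eA2 j]
  -- Step 3 : expand the derivative of HH
  have eA3 : ∀ j : Fin n, (fun x => fderiv ℝ (HH n f a b) x (ee n j) * uu n f j x)
      = fun x => (∑ i, uu n f i x * fderiv ℝ (Pf n a b i) x (ee n j) * uu n f j x)
          + (∑ i, Pf n a b i x * fderiv ℝ (uu n f i) x (ee n j) * uu n f j x) := by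
    intro j
    funext x
    rw [fderiv_hh hf ha hab x j, Finset.sum_mul, ← Finset.sum_add_distrib]
    exact Finset.sum_congr rfl fun i _ => by ring
  have eA4 : ∀ j : Fin n, ∫ x, fderiv ℝ (HH n f a b) x (ee n j) * uu n f j x
      = (∫ x, ∑ i, uu n f i x * fderiv ℝ (Pf n a b i) x (ee n j) * uu n f j x)
        + ∫ x, ∑ i, Pf n a b i x * fderiv ℝ (uu n f i) x (ee n j) * uu n f j x := by
    intro j
    rw [eA3 j]
    exact integral_add (int1 j) (int2 j)
  rw [Finset.sum_congr rfl fun j _ => by rw [eA4 j]]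
  simp only [neg_add]
  rw [Finset.sum_add_distrib]
  -- Step 4 : the first double sum
  have eB : ∑ j, -(∫ x, ∑ i, uu n f i x * fderiv ℝ (Pf n a b i) x (ee n j) * uu n f j x)
      = -((∫ x, GG n f x * Wf n a b x) - 2 * ∫ x, HH n f a b x ^ 2) := by
    rw [Finset.sum_neg_distrib, ← integral_finset_sum _ (fun j _ => int1 j)]
    have e : (fun x => ∑ j, ∑ i, uu n f i x * fderiv ℝ (Pf n a b i) x (ee n j) * uu n f j x)
        = fun x => GG n f x * Wf n a b x - 2 * HH n f a b x ^ 2 :=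
      funext (pw_t2 hab hb hbK)
    rw [e, integral_sub intGW ((intHH2.const_mul 2))]
    congr 1
    rw [integral_const_mul _ _]
  -- Step 5 : the second double sum
  have eCi : ∀ i : Fin n,
      ∑ j, ∫ x, Pf n a b i x * fderiv ℝ (uu n f i) x (ee n j) * uu n f j x
        = (1/2) * - ∫ x, fderiv ℝ (Pf n a b i) x (ee n i) * GG n f x := by
    intro i
    rw [← integral_finset_sum _ (fun j _ => int3 i j)]
    have pwG : (fun x => ∑ j, Pf n a b i x * fderiv ℝ (uu n f i) x (ee n j) * uu n f j x)
        = fun x => (1/2) * (Pf n a b i x * fderiv ℝ (GG n f) x (ee n i)) := by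
      funext x
      calc ∑ j, Pf n a b i x * fderiv ℝ (uu n f i) x (ee n j) * uu n f j x
          = ∑ j, (1/2) * (Pf n a b i x * (2 * uu n f j x * fderiv ℝ (uu n f j) x (ee n i))) :=
            Finset.sum_congr rfl fun j _ => by rw [duu_symm hf x i j]; ring
        _ = (1/2) * (Pf n a b i x * ∑ j, 2 * uu n f j x * fderiv ℝ (uu n f j) x (ee n i)) := by
            rw [Finset.mul_sum, Finset.mul_sum]
        _ = (1/2) * (Pf n a b i x * fderiv ℝ (GG n f) x (ee n i)) := by
            rw [fderiv_gg hf x i]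
    rw [pwG, integral_const_mul _ _,
      ibp hcs (Pf n a b i) (GG n f) (p_contDiff ha hab i) (gg_contDiff hf ha hab) (ee n i) hzG]
  have eC : ∑ j, -(∫ x, ∑ i, Pf n a b i x * fderiv ℝ (uu n f i) x (ee n j) * uu n f j x)
      = (((n:ℝ) - 2) / 2) * ∫ x, GG n f x * Wf n a b x := by
    have hswap : (fun x => ∑ j, ∑ i, Pf n a b i x * fderiv ℝ (uu n f i) x (ee n j) * uu n f j x)
        = fun x => ∑ i, ∑ j, Pf n a b i x * fderiv ℝ (uu n f i) x (ee n j) * uu n f j x :=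
      funext fun x => Finset.sum_comm
    rw [Finset.sum_neg_distrib, ← integral_finset_sum _ (fun j _ => int2 j), hswap,
      integral_finset_sum _ (fun i _ => integrable_finset_sum _ (fun j _ => int3 i j)),
      Finset.sum_congr rfl (fun i _ => by
        rw [integral_finset_sum _ (fun j _ => int3 i j), eCi i])]
    simp only [mul_neg, Finset.sum_neg_distrib, neg_neg]
    rw [← Finset.mul_sum, ← integral_finset_sum _ (fun i _ => int4 i)]
    have e : (fun x => ∑ i, fderiv ℝ (Pf n a b i) x (ee n i) * GG n f x)
        = fun x => ((n:ℝ) - 2) * (GG n f x * Wf n a b x) := by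
      funext x
      rw [← Finset.sum_mul]
      exact pw_t1 hab hb hbK x
    rw [e, integral_const_mul _ _]
    ring
  rw [eB, eC]
  ring
end main3

end Rellich

theorem stmt_7 (n : ℕ) (hn : 5 ≤ n) (hn' : n ≤ 7)
    (f : EuclideanSpace ℝ (Fin n) → ℝ)
    (hf : ContDiff ℝ (⊤ : ℕ∞) f) (hc : HasCompactSupport f)
    (h0 : ∀ x ∈ tsupport f, x ≠ 0) :
    ∫ x, (lap f x) ^ 2 ≥
      4 * ((n : ℝ) - 4) * ∫ x, ‖gradient f x‖ ^ 2 / ‖x‖ ^ 2 := by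
  classical
  have hf' : ContDiff ℝ (⊤:ℕ∞) f := hf.of_le (by simp)
  obtain ⟨ε, hε, hεK⟩ : ∃ ε : ℝ, 0 < ε ∧ ∀ x ∈ tsupport f, ε ≤ Rellich.Nf n x := by
    rcases (tsupport f).eq_empty_or_nonempty with h | h
    · exact ⟨1, one_pos, fun x hx => by rw [h] at hx; exact absurd hx (Set.notMem_empty x)⟩
    · obtain ⟨x0, hx0K, hmin⟩ := IsCompact.exists_isMinOn hc h
        (Rellich.contDiff_nf.continuous.continuousOn)
      exact ⟨Rellich.Nf n x0, Rellich.nf_pos (h0 x0 hx0K), fun x hx => hmin hx⟩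
  have ha : 0 < ε/4 := by linarith
  have hab : ε/4 < ε/2 := by linarith
  have hb : 0 < ε/2 := by linarith
  have hbK : ∀ x ∈ tsupport f, ε/2 < Rellich.Nf n x :=
    fun x hx => lt_of_lt_of_le (by linarith) (hεK x hx)
  set J := ∫ x, Rellich.GG n f x * Rellich.Wf n (ε/4) (ε/2) x with hJ_def
  set Kv := ∫ x, Rellich.HH n f (ε/4) (ε/2) x ^ 2 with hK_def
  set A := ∫ x, lap f x * Rellich.HH n f (ε/4) (ε/2) x with hA_def
  have hRHS : (∫ x, ‖gradient f x‖ ^ 2 / ‖x‖ ^ 2) = J := by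
    rw [hJ_def]
    congr 1
    funext x
    exact Rellich.pw_rhs hf' hab x hbK
  have hA : A = ((n:ℝ) - 4)/2 * J + 2 * Kv :=
    Rellich.key_identity hf' hc ha hab hb hbK
  -- continuity and vanishing of lap
  have hlap_eq : lap f = fun x => ∑ i, fderiv ℝ (Rellich.uu n f i) x (Rellich.ee n i) :=
    funext fun x => Rellich.lap_eq hf' x
  have clap : Continuous (lap f) := by
    rw [hlap_eq]
    exact continuous_finset_sum _ fun i _ =>
      (Rellich.dapply_contDiff (Rellich.uu_contDiff hf' i) _).continuous
  have hzlap : ∀ x ∉ tsupport f, lap f x = 0 := by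
    intro x hx
    rw [hlap_eq]
    exact Finset.sum_eq_zero fun i _ => by rw [Rellich.fderiv_uu_zero hx i]; rfl
  have cH : Continuous (Rellich.HH n f (ε/4) (ε/2)) :=
    (Rellich.hh_contDiff hf' ha hab).continuous
  have hzH : ∀ x ∉ tsupport f, Rellich.HH n f (ε/4) (ε/2) x = 0 :=
    fun x hx => Rellich.hh_zero hx
  have intHH2 : Integrable (fun x => Rellich.HH n f (ε/4) (ε/2) x ^ 2) :=
    Rellich.int_helper hc _ (cH.pow 2) (fun x hx => by rw [hzH x hx]; ring)
  have intLH : Integrable (fun x => lap f x * Rellich.HH n f (ε/4) (ε/2) x) :=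
    Rellich.int_helper hc _ (clap.mul cH) (fun x hx => by rw [hzH x hx, mul_zero])
  have intL2 : Integrable (fun x => lap f x ^ 2) :=
    Rellich.int_helper hc _ (clap.pow 2) (fun x hx => by rw [hzlap x hx]; ring)
  set I := ∫ x, lap f x ^ 2 with hI_def
  have hquad : ∀ t : ℝ, 0 ≤ Kv * (t * t) + (2 * A) * t + I := by
    intro t
    have h0' : 0 ≤ ∫ x, (t * Rellich.HH n f (ε/4) (ε/2) x + lap f x) ^ 2 :=
      integral_nonneg fun x => sq_nonneg _
    have hexp : (fun x => (t * Rellich.HH n f (ε/4) (ε/2) x + lap f x) ^ 2)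
        = fun x => ((t * t) * Rellich.HH n f (ε/4) (ε/2) x ^ 2
            + (2 * t) * (lap f x * Rellich.HH n f (ε/4) (ε/2) x)) + lap f x ^ 2 :=
      funext fun x => by ring
    have i1 : Integrable (fun x => (t * t) * Rellich.HH n f (ε/4) (ε/2) x ^ 2) :=
      intHH2.const_mul _
    have i2 : Integrable (fun x => (2 * t) * (lap f x * Rellich.HH n f (ε/4) (ε/2) x)) :=
      intLH.const_mul _
    have i12 : Integrable (fun x => (t * t) * Rellich.HH n f (ε/4) (ε/2) x ^ 2
        + (2 * t) * (lap f x * Rellich.HH n f (ε/4) (ε/2) x)) := i1.add i2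
    rw [hexp, integral_add i12 intL2, integral_add i1 i2,
      integral_const_mul, integral_const_mul, ← hI_def, ← hK_def, ← hA_def] at h0'
    nlinarith [h0']
  have hCS : A ^ 2 ≤ I * Kv := by
    have hdisc := discrim_le_zero hquad
    rw [discrim] at hdisc
    nlinarith [hdisc]
  have hI0 : 0 ≤ I := integral_nonneg fun x => sq_nonneg _
  have hK0 : 0 ≤ Kv := integral_nonneg fun x => sq_nonneg _
  have hJ0 : 0 ≤ J := by
    apply integral_nonneg
    intro x
    apply mul_nonneg
    · exact Finset.sum_nonneg fun i _ => sq_nonneg _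
    · exact mul_nonneg (Rellich.chi_nonneg x) (inv_nonneg.2 (Rellich.nf_nonneg x))
  have hn5 : (5:ℝ) ≤ (n:ℝ) := by exact_mod_cast hn
  rw [hRHS]
  rcases hK0.eq_or_lt with hKz | hKpos
  · have hAz : A = 0 := by nlinarith [sq_nonneg A]
    have hJz : J = 0 := by nlinarith
    rw [hJz]
    simpa using hI0
  · have h1 : 4 * ((n:ℝ) - 4) * J * Kv ≤ A ^ 2 := by
      rw [hA]
      nlinarith [sq_nonneg (((n:ℝ) - 4)/2 * J - 2 * Kv)]
    have h2 : (4 * ((n:ℝ) - 4) * J) * Kv ≤ I * Kv := by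
      calc (4 * ((n:ℝ) - 4) * J) * Kv = 4 * ((n:ℝ) - 4) * J * Kv := by ring
        _ ≤ A ^ 2 := h1
        _ ≤ I * Kv := hCS
    exact le_of_mul_le_mul_right h2 hKpos
end

section
/- For all f ∈ C_0^∞((0,∞)): ∫_0^∞ |f''(x)|² dx ≥ (9/16) ∫_0^∞ |f(x)|²/x⁴ dx. -/
open MeasureTheory

theorem stmt_15 (f : ℝ → ℝ) (hf : ContDiff ℝ (⊤ : ℕ∞) f) (hc : HasCompactSupport f)
    (hs : tsupport f ⊆ Set.Ioi 0) :
    ∫ x in Set.Ioi (0 : ℝ), (deriv (deriv f) x) ^ 2 ≥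
      (9 / 16) * ∫ x in Set.Ioi (0 : ℝ), (f x) ^ 2 / x ^ 4 := by
  rcases (tsupport f).eq_empty_or_nonempty with hK | hK
  · have hf0 : f = fun _ => 0 :=
      funext fun x => image_eq_zero_of_notMem_tsupport (by simp [hK])
    rw [hf0]
    simp
  -- smoothness of derivatives
  have hsm : ContDiff ℝ (⊤ : ℕ∞) f := hf.of_le (by simp)
  have hfd := contDiff_infty_iff_deriv.mp hsm
  have hfd2 := contDiff_infty_iff_deriv.mp hfd.2
  have cf : Continuous f := hsm.continuous
  have cf' : Continuous (deriv f) := hfd.2.continuous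
  have cf'' : Continuous (deriv (deriv f)) := hfd2.2.continuous
  -- support bounds
  obtain ⟨a, haM, haL⟩ := hc.exists_isLeast hK
  obtain ⟨b, hbM, hbG⟩ := hc.exists_isGreatest hK
  have ha0 : (0 : ℝ) < a := hs haM
  have hKsub : tsupport f ⊆ Set.Icc a b := fun x hx => ⟨haL hx, hbG hx⟩
  set l : ℝ := a / 2 with hl
  set r : ℝ := b + 1 with hr
  have hl0 : (0 : ℝ) < l := by positivity
  have hla : l < a := by simp [hl]; linarith
  have hbr : b < r := by simp [hr]
  have hab : a ≤ b := haL hbM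
  have hlr : l < r := by linarith
  -- vanishing off [a,b]
  have hf0 : ∀ x, x ∉ Set.Icc a b → f x = 0 := fun x hx =>
    image_eq_zero_of_notMem_tsupport fun h => hx (hKsub h)
  have hsub1 : tsupport (deriv f) ⊆ tsupport f :=
    closure_minimal support_deriv_subset isClosed_closure
  have hf1 : ∀ x, x ∉ Set.Icc a b → deriv f x = 0 := by
    intro x hx
    by_contra h
    exact hx (hKsub (hsub1 (subset_closure (Function.mem_support.mpr h))))
  have hf2 : ∀ x, x ∉ Set.Icc a b → deriv (deriv f) x = 0 := by
    intro x hx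
    by_contra h
    exact hx (hKsub (hsub1 (support_deriv_subset (Function.mem_support.mpr h))))
  have hlab : l ∉ Set.Icc a b := fun h => absurd h.1 (not_le.mpr hla)
  have hrab : r ∉ Set.Icc a b := fun h => absurd h.2 (not_le.mpr hbr)
  -- reduce set integrals over Ioi 0 to interval integrals
  have key : ∀ g : ℝ → ℝ, (∀ x, x ∉ Set.Icc a b → g x = 0) →
      (∫ x in Set.Ioi (0 : ℝ), g x) = ∫ x in l..r, g x := by
    intro g hg
    have h1 : (∫ x in Set.Ioi (0 : ℝ), g x) = ∫ x, g x := by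
      apply setIntegral_eq_integral_of_forall_compl_eq_zero
      intro x hx
      exact hg x fun hm => hx (Set.mem_Ioi.mpr (lt_of_lt_of_le ha0 hm.1))
    have h2 : (∫ x in Set.Ioc l r, g x) = ∫ x, g x := by
      apply setIntegral_eq_integral_of_forall_compl_eq_zero
      intro x hx
      exact hg x fun hm => hx ⟨lt_of_lt_of_le hla hm.1, le_trans hm.2 hbr.le⟩
    rw [h1, intervalIntegral.integral_of_le hlr.le, h2]
  -- positivity on the interval
  have hx_pos : ∀ x ∈ Set.uIcc l r, 0 < x := by
    rw [Set.uIcc_of_le hlr.le]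
    exact fun x hx => lt_of_lt_of_le hl0 hx.1
  have hx_ne : ∀ x ∈ Set.uIcc l r, x ≠ 0 := fun x hx => (hx_pos x hx).ne'
  -- integrability facts
  have hxc : ∀ n : ℕ, ContinuousOn (fun x : ℝ => (x ^ n)⁻¹) (Set.uIcc l r) := by
    intro n
    exact ContinuousOn.inv₀ (continuousOn_pow n) fun x hx => pow_ne_zero n (hx_ne x hx)
  have hintA : IntervalIntegrable (fun x => (deriv (deriv f) x) ^ 2) volume l r :=
    ((cf''.pow 2).continuousOn).intervalIntegrable
  have hintB : IntervalIntegrable (fun x => (deriv f x) ^ 2 / x ^ 2) volume l r :=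
    ((((cf'.pow 2).continuousOn).mul (hxc 2)).congr
      (fun x _ => by rw [div_eq_mul_inv]; rfl)).intervalIntegrable
  have hintC : IntervalIntegrable (fun x => (f x) ^ 2 / x ^ 4) volume l r :=
    ((((cf.pow 2).continuousOn).mul (hxc 4)).congr
      (fun x _ => by rw [div_eq_mul_inv]; rfl)).intervalIntegrable
  have hx1 : ContinuousOn (fun x : ℝ => x⁻¹) (Set.uIcc l r) :=
    (hxc 1).congr fun x _ => by simp
  have hcD : ContinuousOn (fun x => 2 * deriv f x * deriv (deriv f) x / x) (Set.uIcc l r) :=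
    ((((continuous_const.mul cf').mul cf'').continuousOn.mul hx1).congr
      fun x _ => div_eq_mul_inv _ _)
  have hintD : IntervalIntegrable (fun x => 2 * deriv f x * deriv (deriv f) x / x)
      volume l r := hcD.intervalIntegrable
  have hintE : IntervalIntegrable (fun x => 2 / 3 * (f x * deriv f x / x ^ 3)) volume l r :=
    ((continuousOn_const.mul (((cf.continuousOn.mul cf'.continuousOn).mul (hxc 3)).congr
      (fun x _ => by rw [div_eq_mul_inv]; rfl))).intervalIntegrable)
  -- integration by parts 1 : ∫ f'^2/x^2 = ∫ 2 f' f'' / x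
  have ibp1 : ∫ x in l..r, ((2 * deriv f x * deriv (deriv f) x) * (-(x⁻¹))
      + (deriv f x) ^ 2 * (x ^ 2)⁻¹) = 0 := by
    rw [intervalIntegral.integral_deriv_mul_eq_sub_of_hasDerivAt
      (u := fun x => deriv f x ^ 2) (v := fun x => -(x⁻¹))
      (u' := fun x => 2 * deriv f x * deriv (deriv f) x) (v' := fun x => (x ^ 2)⁻¹)
      ((cf'.pow 2).continuousOn)
      (hx1.neg)
      (fun x hx => by
        have hdx : HasDerivAt (deriv f) (deriv (deriv f) x) x :=
          (hfd2.1 x).hasDerivAt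
        have := hdx.pow 2
        exact this.congr_deriv (by push_cast; ring))
      (fun x hx => by
        have hx0 : x ≠ 0 := by
          have : x ∈ Set.uIcc l r := by
            rw [Set.uIcc_of_le hlr.le]
            rw [min_eq_left hlr.le, max_eq_right hlr.le] at hx
            exact Set.mem_Icc.mpr ⟨hx.1.le, hx.2.le⟩
          exact hx_ne x this
        exact (hasDerivAt_inv hx0).neg.congr_deriv (by ring))
      ((((continuous_const.mul cf').mul cf'').continuousOn).intervalIntegrable)
      ((hxc 2).intervalIntegrable)]
    rw [hf1 l hlab, hf1 r hrab]
    ring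
  have eqBD : (∫ x in l..r, (deriv f x) ^ 2 / x ^ 2)
      - (∫ x in l..r, 2 * deriv f x * deriv (deriv f) x / x) = 0 := by
    rw [← intervalIntegral.integral_sub hintB hintD, ← ibp1]
    apply intervalIntegral.integral_congr
    intro x hx
    ring
  -- integration by parts 2 : ∫ f^2/x^4 = ∫ (2/3) f f' / x^3
  have ibp2 : ∫ x in l..r, ((2 * f x * deriv f x) * (-(1/3) * (x ^ 3)⁻¹)
      + (f x) ^ 2 * (x ^ 4)⁻¹) = 0 := by
    rw [intervalIntegral.integral_deriv_mul_eq_sub_of_hasDerivAt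
      (u := fun x => f x ^ 2) (v := fun x => -(1/3) * (x ^ 3)⁻¹)
      (u' := fun x => 2 * f x * deriv f x) (v' := fun x => (x ^ 4)⁻¹)
      ((cf.pow 2).continuousOn)
      (continuousOn_const.mul (hxc 3))
      (fun x hx => by
        have hdx : HasDerivAt f (deriv f x) x := (hfd.1 x).hasDerivAt
        have := hdx.pow 2
        exact this.congr_deriv (by push_cast; ring))
      (fun x hx => by
        have hx0 : x ≠ 0 := by
          have : x ∈ Set.uIcc l r := by
            rw [Set.uIcc_of_le hlr.le]
            rw [min_eq_left hlr.le, max_eq_right hlr.le] at hx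
            exact Set.mem_Icc.mpr ⟨hx.1.le, hx.2.le⟩
          exact hx_ne x this
        have h3 : (x : ℝ) ^ 3 ≠ 0 := pow_ne_zero 3 hx0
        have hd := ((hasDerivAt_pow 3 x).inv h3).const_mul (-(1/3) : ℝ)
        refine hd.congr_deriv ?_
        field_simp
        ring)
      ((((continuous_const.mul cf).mul cf').continuousOn).intervalIntegrable)
      (((hxc 4)).intervalIntegrable)]
    rw [hf0 l hlab, hf0 r hrab]
    ring
  have eqCE : (∫ x in l..r, (f x) ^ 2 / x ^ 4)
      - (∫ x in l..r, 2 / 3 * (f x * deriv f x / x ^ 3)) = 0 := by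
    rw [← intervalIntegral.integral_sub hintC hintE, ← ibp2]
    apply intervalIntegral.integral_congr
    intro x hx
    ring
  -- pointwise bounds + monotonicity
  have mono1 : (∫ x in l..r, 2 * deriv f x * deriv (deriv f) x / x)
      ≤ ∫ x in l..r, (2 * (deriv (deriv f) x) ^ 2 + 1 / 2 * ((deriv f x) ^ 2 / x ^ 2)) := by
    apply intervalIntegral.integral_mono_on hlr.le hintD
      ((hintA.const_mul 2).add (hintB.const_mul (1/2)))
    intro x hx
    have hx0 : (0 : ℝ) < x := lt_of_lt_of_le hl0 hx.1
    have e1 : 2 * deriv f x * deriv (deriv f) x / x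
        = 2 * (deriv f x / x) * deriv (deriv f) x := by ring
    have e2 : (deriv f x) ^ 2 / x ^ 2 = (deriv f x / x) ^ 2 := by ring
    rw [e1, e2]
    nlinarith [sq_nonneg (deriv f x / x - 2 * deriv (deriv f) x)]
  have mono2 : (∫ x in l..r, 2 / 3 * (f x * deriv f x / x ^ 3))
      ≤ ∫ x in l..r, (2 / 9 * ((deriv f x) ^ 2 / x ^ 2) + 1 / 2 * ((f x) ^ 2 / x ^ 4)) := by
    apply intervalIntegral.integral_mono_on hlr.le hintE
      ((hintB.const_mul (2/9)).add (hintC.const_mul (1/2)))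
    intro x hx
    have hx0 : (0 : ℝ) < x := lt_of_lt_of_le hl0 hx.1
    have e1 : 2 / 3 * (f x * deriv f x / x ^ 3)
        = 2 / 3 * ((f x / x ^ 2) * (deriv f x / x)) := by ring
    have e2 : (deriv f x) ^ 2 / x ^ 2 = (deriv f x / x) ^ 2 := by ring
    have e3 : (f x) ^ 2 / x ^ 4 = (f x / x ^ 2) ^ 2 := by ring
    rw [e1, e2, e3]
    nlinarith [sq_nonneg (2 * (deriv f x / x) - 3 * (f x / x ^ 2))]
  -- assemble
  have split1 : (∫ x in l..r, (2 * (deriv (deriv f) x) ^ 2 + 1 / 2 * ((deriv f x) ^ 2 / x ^ 2)))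
      = 2 * (∫ x in l..r, (deriv (deriv f) x) ^ 2)
        + 1 / 2 * (∫ x in l..r, (deriv f x) ^ 2 / x ^ 2) := by
    rw [intervalIntegral.integral_add (hintA.const_mul 2) (hintB.const_mul (1/2)),
      intervalIntegral.integral_const_mul, intervalIntegral.integral_const_mul]
  have split2 : (∫ x in l..r, (2 / 9 * ((deriv f x) ^ 2 / x ^ 2) + 1 / 2 * ((f x) ^ 2 / x ^ 4)))
      = 2 / 9 * (∫ x in l..r, (deriv f x) ^ 2 / x ^ 2)
        + 1 / 2 * (∫ x in l..r, (f x) ^ 2 / x ^ 4) := by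
    rw [intervalIntegral.integral_add (hintB.const_mul (2/9)) (hintC.const_mul (1/2)),
      intervalIntegral.integral_const_mul, intervalIntegral.integral_const_mul]
  have gA : (∫ x in Set.Ioi (0 : ℝ), (deriv (deriv f) x) ^ 2)
      = ∫ x in l..r, (deriv (deriv f) x) ^ 2 :=
    key _ fun x hx => by rw [hf2 x hx]; ring
  have gC : (∫ x in Set.Ioi (0 : ℝ), (f x) ^ 2 / x ^ 4)
      = ∫ x in l..r, (f x) ^ 2 / x ^ 4 :=
    key _ fun x hx => by rw [hf0 x hx]; simp
  rw [ge_iff_le, gA, gC]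
  set IA := ∫ x in l..r, (deriv (deriv f) x) ^ 2
  set IB := ∫ x in l..r, (deriv f x) ^ 2 / x ^ 2
  set IC := ∫ x in l..r, (f x) ^ 2 / x ^ 4
  rw [split1] at mono1
  rw [split2] at mono2
  linarith
end

section
/- Let n ≥ 5 and define G_n(α) = α(n−α)((n−4)(α−2) − α(n−α)/2)/2 for α ∈ ℝ. Then for α_± = 2 ± (n²/2 − 2n + 4)^{1/2} one has G_n(α_±) = (n(n−4)/4)², α_+ ≥ 4, α_− ≤ 0, and G_n(α) ≤ (n(n−4)/4)² for all α with α ≤ 0 or α ≥ 4. -/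
theorem stmt_18 (n : ℕ) (hn : 5 ≤ n) (G : ℝ → ℝ)
    (hG : ∀ α : ℝ, G α =
      α * ((n : ℝ) - α) * (((n : ℝ) - 4) * (α - 2) - α * ((n : ℝ) - α) / 2) / 2) :
    G (2 + Real.sqrt ((n : ℝ) ^ 2 / 2 - 2 * n + 4)) = ((n : ℝ) * ((n : ℝ) - 4) / 4) ^ 2 ∧
    G (2 - Real.sqrt ((n : ℝ) ^ 2 / 2 - 2 * n + 4)) = ((n : ℝ) * ((n : ℝ) - 4) / 4) ^ 2 ∧
    4 ≤ 2 + Real.sqrt ((n : ℝ) ^ 2 / 2 - 2 * n + 4) ∧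
    2 - Real.sqrt ((n : ℝ) ^ 2 / 2 - 2 * n + 4) ≤ 0 ∧
    (∀ α : ℝ, (α ≤ 0 ∨ 4 ≤ α) → G α ≤ ((n : ℝ) * ((n : ℝ) - 4) / 4) ^ 2) := by
  have hn' : (5 : ℝ) ≤ (n : ℝ) := by exact_mod_cast hn
  set v : ℝ := (n : ℝ) ^ 2 / 2 - 2 * n + 4 with hv
  have hv0 : 0 ≤ v := by rw [hv]; nlinarith [sq_nonneg ((n:ℝ) - 2)]
  set s : ℝ := Real.sqrt v with hsdef
  have hs0 : 0 ≤ s := Real.sqrt_nonneg v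
  have hs2 : s ^ 2 = v := Real.sq_sqrt hv0
  have hv4 : (4 : ℝ) ≤ v := by rw [hv]; nlinarith
  have hs2' : 2 ≤ s := by
    have h4 : Real.sqrt 4 = 2 := by
      rw [show (4:ℝ) = 2 ^ 2 by norm_num, Real.sqrt_sq (by norm_num : (0:ℝ) ≤ 2)]
    calc (2:ℝ) = Real.sqrt 4 := h4.symm
    _ ≤ Real.sqrt v := Real.sqrt_le_sqrt hv4
  refine ⟨?_, ?_, by linarith, by linarith, ?_⟩
  · rw [hG]
    linear_combination (-(s ^ 2 - v) / 4) * hs2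
  · rw [hG]
    linear_combination (-(s ^ 2 - v) / 4) * hs2
  · intro α _
    rw [hG]
    nlinarith [sq_nonneg (α ^ 2 - 4 * α - (n : ℝ) ^ 2 / 2 + 2 * n)]
end

section
/- Let n ≥ 2 and α, β ∈ ℝ. Define T_{α,β} f = −Δf + α |x|^{-2} (x·∇f) + β |x|^{-2} f and T⁺_{α,β} f = −Δf − α |x|^{-2} (x·∇f) + (β − α(n−2)) |x|^{-2} f on C^∞(ℝⁿ \ {0}). Then for f ∈ C^∞(ℝⁿ \ {0}), (T⁺_{α,β} T_{α,β} f)(x) = (Δ²f)(x) + ((n−4)α − 2β)|x|^{-2}(Δf)(x) + α(4−α)|x|^{-4} Σ_{j,k} x_j x_k ∂_{x_j}∂_{x_k} f(x) + (−(n−3)α² + 2(n−2)α + 4β)|x|^{-4}(x·∇f)(x) + (β² + 2(n−4)β − (n−4)αβ)|x|^{-4} f(x). -/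
open MeasureTheory

noncomputable def TOp {n : ℕ} (α β : ℝ) (f : EuclideanSpace ℝ (Fin n) → ℝ) :
    EuclideanSpace ℝ (Fin n) → ℝ :=
  fun x => -lap f x + α * (inner ℝ x (gradient f x) : ℝ) / ‖x‖ ^ 2 + β * f x / ‖x‖ ^ 2

noncomputable def TplusOp {n : ℕ} (α β : ℝ) (f : EuclideanSpace ℝ (Fin n) → ℝ) :
    EuclideanSpace ℝ (Fin n) → ℝ :=
  fun x => -lap f x - α * (inner ℝ x (gradient f x) : ℝ) / ‖x‖ ^ 2
    + (β - α * ((n : ℝ) - 2)) * f x / ‖x‖ ^ 2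

namespace Stmt19Aux

open Filter Topology

variable {n : ℕ}
local notation "V" => EuclideanSpace ℝ (Fin n)
local notation "U" => ({(0:EuclideanSpace ℝ (Fin n))}ᶜ : Set (EuclideanSpace ℝ (Fin n)))

noncomputable def pd (i : Fin n) (f : V → ℝ) : V → ℝ :=
  fun x => fderiv ℝ f x (EuclideanSpace.single i 1)

theorem U_nhds {x : V} (hx : x ≠ 0) : U ∈ 𝓝 x :=
  (isOpen_compl_singleton).mem_nhds (by simpa using hx)

theorem cdAt {f : V → ℝ} (hf : ContDiffOn ℝ (⊤ : ℕ∞) f U) {x : V} (hx : x ≠ 0) :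
    ContDiffAt ℝ (⊤ : ℕ∞) f x := hf.contDiffAt (U_nhds hx)

theorem dAt {f : V → ℝ} (hf : ContDiffOn ℝ (⊤ : ℕ∞) f U) {x : V} (hx : x ≠ 0) :
    DifferentiableAt ℝ f x := (cdAt hf hx).differentiableAt (by simp)

theorem pd_smooth {f : V → ℝ} (hf : ContDiffOn ℝ (⊤ : ℕ∞) f U) (i : Fin n) :
    ContDiffOn ℝ (⊤ : ℕ∞) (pd i f) U := by
  have h1 : ContDiffOn ℝ (⊤ : ℕ∞) (fderiv ℝ f) U := hf.fderiv_of_isOpen isOpen_compl_singleton (by simp)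
  exact (ContinuousLinearMap.apply ℝ ℝ (EuclideanSpace.single i 1)).contDiff.comp_contDiffOn h1

theorem eventually_eq_of_eqOnU {f g : V → ℝ} (h : ∀ y : V, y ≠ 0 → f y = g y) {x : V}
    (hx : x ≠ 0) : f =ᶠ[𝓝 x] g := by
  filter_upwards [U_nhds hx] with y hy
  exact h y (by simpa using hy)

theorem pd_congr {f g : V → ℝ} (h : ∀ y : V, y ≠ 0 → f y = g y) {x : V} (hx : x ≠ 0)
    (i : Fin n) : pd i f x = pd i g x := by
  unfold pd; rw [(eventually_eq_of_eqOnU h hx).fderiv_eq]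

theorem pd_add {f g : V → ℝ} {x : V} (hf : DifferentiableAt ℝ f x)
    (hg : DifferentiableAt ℝ g x) (i : Fin n) :
    pd i (fun y => f y + g y) x = pd i f x + pd i g x := by
  unfold pd; rw [fderiv_fun_add hf hg]; rfl

theorem pd_neg {f : V → ℝ} {x : V} (i : Fin n) :
    pd i (fun y => -f y) x = -pd i f x := by
  unfold pd; rw [fderiv_fun_neg]; rfl

theorem pd_mul {f g : V → ℝ} {x : V} (hf : DifferentiableAt ℝ f x)
    (hg : DifferentiableAt ℝ g x) (i : Fin n) :
    pd i (fun y => f y * g y) x = pd i f x * g x + f x * pd i g x := by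
  unfold pd; rw [fderiv_fun_mul hf hg]; simp; ring

theorem pd_const_mul {f : V → ℝ} {x : V} (hf : DifferentiableAt ℝ f x) (c : ℝ) (i : Fin n) :
    pd i (fun y => c * f y) x = c * pd i f x := by
  unfold pd; rw [fderiv_const_mul hf]; rfl

theorem pd_sum {F : Fin n → V → ℝ} {x : V} (hF : ∀ j, DifferentiableAt ℝ (F j) x) (i : Fin n) :
    pd i (fun y => ∑ j : Fin n, F j y) x = ∑ j : Fin n, pd i (F j) x := by
  unfold pd; rw [fderiv_fun_sum (fun j _ => hF j)]; simp

theorem coord_contDiff (j : Fin n) : ContDiff ℝ (⊤ : WithTop ℕ∞) (fun y : V => y j) :=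
  (EuclideanSpace.proj (𝕜 := ℝ) j).contDiff

theorem coord_dAt {x : V} (j : Fin n) : DifferentiableAt ℝ (fun y : V => y j) x :=
  (coord_contDiff j).differentiable (by simp) x

theorem pd_coord {x : V} (i j : Fin n) :
    pd i (fun y : V => y j) x = if i = j then 1 else 0 := by
  unfold pd
  have : (fun y : V => y j) = fun y => (EuclideanSpace.proj j : V →L[ℝ] ℝ) y := rfl
  rw [this, (EuclideanSpace.proj (𝕜 := ℝ) j).fderiv]
  simp [EuclideanSpace.single_apply, eq_comm]

theorem pd_pd_eq {f : V → ℝ} (hf : ContDiffOn ℝ (⊤ : ℕ∞) f U) {x : V} (hx : x ≠ 0) (i j : Fin n) :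
    pd i (pd j f) x =
      fderiv ℝ (fderiv ℝ f) x (EuclideanSpace.single i 1) (EuclideanSpace.single j 1) := by
  have hd : DifferentiableAt ℝ (fderiv ℝ f) x :=
    ((cdAt hf hx).fderiv_right (m := (⊤ : ℕ∞)) (by simp)).differentiableAt (by simp)
  unfold pd
  rw [fderiv_clm_apply hd (differentiableAt_const _)]
  simp

theorem pd_comm {f : V → ℝ} (hf : ContDiffOn ℝ (⊤ : ℕ∞) f U) {x : V} (hx : x ≠ 0) (i j : Fin n) :
    pd i (pd j f) x = pd j (pd i f) x := by
  rw [pd_pd_eq hf hx, pd_pd_eq hf hx]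
  exact ((cdAt hf hx).isSymmSndFDerivAt (by rw [minSmoothness_of_isRCLikeNormedField]; exact WithTop.coe_le_coe.2 le_top)) _ _

theorem inner_grad_eq (f : V → ℝ) (x : V) :
    (inner ℝ x (gradient f x) : ℝ) = ∑ i : Fin n, x i * pd i f x := by
  have h1 : (inner ℝ x (gradient f x) : ℝ) = fderiv ℝ f x x := by
    rw [real_inner_comm]
    exact InnerProductSpace.toDual_symm_apply
  have h2 : ∑ i : Fin n, x i • EuclideanSpace.single i (1:ℝ) = x := by
    have := (EuclideanSpace.basisFun (Fin n) ℝ).sum_repr x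
    simpa [EuclideanSpace.basisFun_apply, EuclideanSpace.basisFun_repr] using this
  have key : ∀ L : (EuclideanSpace ℝ (Fin n)) →L[ℝ] ℝ,
      L x = ∑ i : Fin n, x i * L (EuclideanSpace.single i 1) := by
    intro L
    conv_lhs => rw [← h2]
    rw [map_sum]
    simp
  rw [h1, key]
  rfl

theorem lap_eq_pdsum {f : V → ℝ} (hf : ContDiffOn ℝ (⊤ : ℕ∞) f U) {x : V} (hx : x ≠ 0) :
    lap f x = ∑ i : Fin n, pd i (pd i f) x :=
  (Finset.sum_congr rfl fun i _ => (pd_pd_eq hf hx i i).symm)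

theorem lap_congr {f g : V → ℝ} (h : ∀ y : V, y ≠ 0 → f y = g y) {x : V} (hx : x ≠ 0) :
    lap f x = lap g x := by
  have hev : fderiv ℝ f =ᶠ[𝓝 x] fderiv ℝ g := by
    filter_upwards [U_nhds hx] with y hy
    exact (eventually_eq_of_eqOnU h (by simpa using hy)).fderiv_eq
  unfold lap
  rw [hev.fderiv_eq]

/-! ### Concrete building blocks -/

noncomputable def NN : V → ℝ := fun y => ∑ j : Fin n, y j * y j
noncomputable def NI : V → ℝ := fun y => (NN y)⁻¹
noncomputable def SS (f : V → ℝ) : V → ℝ := fun y => ∑ j : Fin n, y j * pd j f y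
noncomputable def LF (f : V → ℝ) : V → ℝ := fun y => ∑ i : Fin n, pd i (pd i f) y
noncomputable def NI1 (i : Fin n) : V → ℝ := fun y => -2 * (y i * (NI y * NI y))
noncomputable def SA (f : V → ℝ) (i : Fin n) : V → ℝ :=
  fun y => pd i f y + ∑ j : Fin n, y j * pd i (pd j f) y
noncomputable def GG (α β : ℝ) (f : V → ℝ) : V → ℝ :=
  fun y => -LF f y + α * (SS f y * NI y) + β * (f y * NI y)
noncomputable def G1 (α β : ℝ) (f : V → ℝ) (i : Fin n) : V → ℝ := fun y =>
  -pd i (LF f) y + α * (SA f i y * NI y + SS f y * NI1 i y)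
    + β * (pd i f y * NI y + f y * NI1 i y)

theorem NN_eq (x : V) : NN x = ‖x‖ ^ 2 := by
  have : (inner ℝ x x : ℝ) = ∑ j : Fin n, x j * x j := by
    simp only [PiLp.inner_apply, RCLike.inner_apply, conj_trivial, mul_comm]
  rw [NN, ← this, real_inner_self_eq_norm_sq]

theorem NN_ne {x : V} (hx : x ≠ 0) : NN x ≠ 0 := by
  rw [NN_eq]
  exact pow_ne_zero _ (norm_ne_zero_iff.2 hx)

theorem NN_smooth : ContDiff ℝ (⊤ : WithTop ℕ∞) (NN : V → ℝ) :=
  ContDiff.sum fun j _ => (coord_contDiff j).mul (coord_contDiff j)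

theorem NI_smooth : ContDiffOn ℝ (⊤ : ℕ∞) (NI : V → ℝ) U :=
  ((NN_smooth.of_le le_top).contDiffOn).inv fun x hx => NN_ne (by simpa using hx)

theorem pd_NN {x : V} (i : Fin n) : pd i (NN : V → ℝ) x = 2 * x i := by
  unfold NN
  rw [pd_sum (fun j => (coord_dAt j).fun_mul (coord_dAt j))]
  have : ∀ j : Fin n, pd i (fun y : V => y j * y j) x
      = (if i = j then 1 else 0) * x j + x j * (if i = j then 1 else 0) := by
    intro j
    rw [pd_mul (coord_dAt j) (coord_dAt j), pd_coord]
  simp only [this]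
  simp [Finset.sum_add_distrib, Finset.sum_ite_eq, mul_comm]
  ring

theorem pd_NI {x : V} (hx : x ≠ 0) (i : Fin n) : pd i (NI : V → ℝ) x = NI1 i x := by
  have hNN : DifferentiableAt ℝ (NN : V → ℝ) x := NN_smooth.differentiable (by simp) x
  have hinv : DifferentiableAt ℝ (Inv.inv : ℝ → ℝ) (NN x) := differentiableAt_inv (NN_ne hx)
  have hcomp : pd i (NI : V → ℝ) x
      = fderiv ℝ (Inv.inv : ℝ → ℝ) (NN x) (fderiv ℝ (NN : V → ℝ) x (EuclideanSpace.single i 1)) := by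
    unfold pd NI
    rw [show (fun y : V => (NN y)⁻¹) = (Inv.inv : ℝ → ℝ) ∘ (NN : V → ℝ) from rfl]
    rw [fderiv_comp x hinv hNN]
    rfl
  rw [hcomp, fderiv_inv]
  show (fderiv ℝ (NN : V → ℝ) x (EuclideanSpace.single i 1)) • (-(NN x ^ 2)⁻¹) = NI1 i x
  have : fderiv ℝ (NN : V → ℝ) x (EuclideanSpace.single i 1) = 2 * x i := pd_NN i
  rw [this]
  unfold NI1 NI
  rw [smul_eq_mul]
  ring


/-! ### Smoothness of building blocks -/

theorem coord_smoothU (j : Fin n) : ContDiffOn ℝ (⊤ : ℕ∞) (fun y : V => y j) U :=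
  ((coord_contDiff j).of_le le_top).contDiffOn

theorem SS_smooth {f : V → ℝ} (hf : ContDiffOn ℝ (⊤ : ℕ∞) f U) : ContDiffOn ℝ (⊤ : ℕ∞) (SS f) U := by
  unfold SS
  exact ContDiffOn.sum fun j _ => (coord_smoothU j).mul (pd_smooth hf j)

theorem LF_smooth {f : V → ℝ} (hf : ContDiffOn ℝ (⊤ : ℕ∞) f U) : ContDiffOn ℝ (⊤ : ℕ∞) (LF f) U := by
  unfold LF
  exact ContDiffOn.sum fun i _ => pd_smooth (pd_smooth hf i) i

theorem NI1_smooth (i : Fin n) : ContDiffOn ℝ (⊤ : ℕ∞) (NI1 i : V → ℝ) U := by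
  unfold NI1
  exact contDiffOn_const.mul ((coord_smoothU i).mul (NI_smooth.mul NI_smooth))

theorem SA_smooth {f : V → ℝ} (hf : ContDiffOn ℝ (⊤ : ℕ∞) f U) (i : Fin n) : ContDiffOn ℝ (⊤ : ℕ∞) (SA f i) U := by
  unfold SA
  exact (pd_smooth hf i).add
    (ContDiffOn.sum fun j _ => (coord_smoothU j).mul (pd_smooth (pd_smooth hf j) i))

theorem GG_smooth {f : V → ℝ} (hf : ContDiffOn ℝ (⊤ : ℕ∞) f U) (α β : ℝ) : ContDiffOn ℝ (⊤ : ℕ∞) (GG α β f) U := by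
  unfold GG
  exact (((LF_smooth hf).neg).add (contDiffOn_const.mul ((SS_smooth hf).mul NI_smooth))).add
    (contDiffOn_const.mul (hf.mul NI_smooth))

/-! ### First derivatives -/

theorem pd_SS {f : V → ℝ} {x : V} (hf : ContDiffOn ℝ (⊤ : ℕ∞) f U) (hx : x ≠ 0) (i : Fin n) :
    pd i (SS f) x = SA f i x := by
  unfold SS SA
  rw [pd_sum (fun j => (coord_dAt j).fun_mul (dAt (pd_smooth hf j) hx))]
  have h : ∀ j : Fin n, pd i (fun y : V => y j * pd j f y) x
      = (if i = j then 1 else 0) * pd j f x + x j * pd i (pd j f) x := fun j => by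
    rw [pd_mul (coord_dAt j) (dAt (pd_smooth hf j) hx), pd_coord]
  simp only [h]
  rw [Finset.sum_add_distrib]
  congr 1
  simp [ite_mul, Finset.sum_ite_eq]

theorem pd_GG {f : V → ℝ} {x : V} (hf : ContDiffOn ℝ (⊤ : ℕ∞) f U) (hx : x ≠ 0) (α β : ℝ) (i : Fin n) :
    pd i (GG α β f) x = G1 α β f i x := by
  unfold GG G1
  have d1 : DifferentiableAt ℝ (fun y => -LF f y) x := (dAt (LF_smooth hf) hx).neg
  have d2 : DifferentiableAt ℝ (fun y => SS f y * NI y) x :=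
    (dAt (SS_smooth hf) hx).mul (dAt NI_smooth hx)
  have d2' : DifferentiableAt ℝ (fun y => α * (SS f y * NI y)) x := d2.const_mul α
  have d3 : DifferentiableAt ℝ (fun y => f y * NI y) x := (dAt hf hx).mul (dAt NI_smooth hx)
  have d3' : DifferentiableAt ℝ (fun y => β * (f y * NI y)) x := d3.const_mul β
  rw [pd_add (d1.fun_add d2') d3', pd_add d1 d2', pd_neg, pd_const_mul d2, pd_const_mul d3,
      pd_mul (dAt (SS_smooth hf) hx) (dAt NI_smooth hx),
      pd_mul (dAt hf hx) (dAt NI_smooth hx), pd_SS hf hx, pd_NI hx]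

theorem TOp_eq {f : V → ℝ} (hf : ContDiffOn ℝ (⊤ : ℕ∞) f U) (α β : ℝ) :
    ∀ y : V, y ≠ 0 → TOp α β f y = GG α β f y := by
  intro y hy
  unfold TOp GG
  rw [lap_eq_pdsum hf hy, inner_grad_eq, ← NN_eq]
  simp only [NI, LF, SS, div_eq_mul_inv]
  ring

/-! ### Second-level derivatives -/

theorem pd_SA_self {f : V → ℝ} {x : V} (hf : ContDiffOn ℝ (⊤ : ℕ∞) f U) (hx : x ≠ 0) (i : Fin n) :
    pd i (SA f i) x
      = 2 * pd i (pd i f) x + ∑ j : Fin n, x j * pd i (pd i (pd j f)) x := by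
  unfold SA
  rw [pd_add (dAt (pd_smooth hf i) hx)
      ((dAt (ContDiffOn.sum fun j _ =>
        (coord_smoothU j).mul (pd_smooth (pd_smooth hf j) i)) hx))]
  rw [pd_sum (fun j => (coord_dAt j).fun_mul (dAt (pd_smooth (pd_smooth hf j) i) hx))]
  have h : ∀ j : Fin n, pd i (fun y : V => y j * pd i (pd j f) y) x
      = (if i = j then 1 else 0) * pd i (pd j f) x + x j * pd i (pd i (pd j f)) x := fun j => by
    rw [pd_mul (coord_dAt j) (dAt (pd_smooth (pd_smooth hf j) i) hx), pd_coord]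
  simp only [h]
  rw [Finset.sum_add_distrib]
  simp [ite_mul, Finset.sum_ite_eq]
  ring

theorem third_swap {f : V → ℝ} {x : V} (hf : ContDiffOn ℝ (⊤ : ℕ∞) f U) (hx : x ≠ 0) :
    ∑ i : Fin n, ∑ j : Fin n, x j * pd i (pd i (pd j f)) x
      = ∑ j : Fin n, x j * pd j (LF f) x := by
  rw [Finset.sum_comm]
  refine Finset.sum_congr rfl fun j _ => ?_
  rw [← Finset.mul_sum]
  congr 1
  have hswap : ∀ i : Fin n, pd i (pd i (pd j f)) x = pd j (pd i (pd i f)) x := by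
    intro i
    have e1 : pd i (pd i (pd j f)) x = pd i (pd j (pd i f)) x :=
      pd_congr (fun y hy => pd_comm hf hy i j) hx i
    rw [e1, pd_comm (pd_smooth hf i) hx i j]
  rw [Finset.sum_congr rfl (fun i _ => hswap i)]
  unfold LF
  exact (pd_sum (fun i => dAt (pd_smooth (pd_smooth hf i) i) hx) j).symm

theorem pd_NI1_self {x : V} (hx : x ≠ 0) (i : Fin n) :
    pd i (NI1 i : V → ℝ) x
      = -2 * (NI x * NI x) + 8 * (x i * x i) * (NI x * NI x * NI x) := by
  unfold NI1
  rw [pd_const_mul ((coord_dAt i).fun_mul ((dAt NI_smooth hx).fun_mul (dAt NI_smooth hx))),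
      pd_mul (coord_dAt i) ((dAt NI_smooth hx).fun_mul (dAt NI_smooth hx)),
      pd_mul (dAt NI_smooth hx) (dAt NI_smooth hx), pd_coord, pd_NI hx]
  simp only [NI1, eq_self_iff_true, if_true]
  ring


/-! ### Final assembly -/

noncomputable def HHv (f : V → ℝ) (x : V) : ℝ :=
  ∑ i : Fin n, x i * ∑ j : Fin n, x j * pd i (pd j f) x
noncomputable def Pv (f : V → ℝ) (x : V) : ℝ := ∑ j : Fin n, x j * pd j (LF f) x
noncomputable def BLv (f : V → ℝ) (x : V) : ℝ := ∑ i : Fin n, pd i (pd i (LF f)) x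

theorem pd_G1_self {f : V → ℝ} {x : V} (hf : ContDiffOn ℝ (⊤ : ℕ∞) f U) (hx : x ≠ 0) (α β : ℝ)
    (i : Fin n) :
    pd i (G1 α β f i) x =
      -pd i (pd i (LF f)) x
      + α * ((pd i (SA f i) x * NI x + SA f i x * NI1 i x)
           + (SA f i x * NI1 i x + SS f x * pd i (NI1 i) x))
      + β * ((pd i (pd i f) x * NI x + pd i f x * NI1 i x)
           + (pd i f x * NI1 i x + f x * pd i (NI1 i) x)) := by
  unfold G1
  have dLF1 := dAt (pd_smooth (LF_smooth hf) i) hx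
  have dSA := dAt (SA_smooth hf i) hx
  have dNI := dAt (NI_smooth (n := n)) hx
  have dSS := dAt (SS_smooth hf) hx
  have dNI1 := dAt (NI1_smooth i) hx
  have dpd := dAt (pd_smooth hf i) hx
  have dF := dAt hf hx
  have d2 : DifferentiableAt ℝ (fun y => SA f i y * NI y + SS f y * NI1 i y) x :=
    (dSA.mul dNI).add (dSS.mul dNI1)
  have d3 : DifferentiableAt ℝ (fun y => pd i f y * NI y + f y * NI1 i y) x :=
    (dpd.mul dNI).add (dF.mul dNI1)
  rw [pd_add (dLF1.fun_neg.fun_add (d2.const_mul α)) (d3.const_mul β),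
      pd_add dLF1.fun_neg (d2.const_mul α), pd_neg, pd_const_mul d2, pd_const_mul d3,
      pd_add (dSA.fun_mul dNI) (dSS.fun_mul dNI1), pd_add (dpd.fun_mul dNI) (dF.fun_mul dNI1),
      pd_mul dSA dNI, pd_mul dSS dNI1, pd_mul dpd dNI, pd_mul dF dNI1,
      pd_SS hf hx, pd_NI hx]

theorem sum_pd_G1 {f : V → ℝ} {x : V} (hf : ContDiffOn ℝ (⊤ : ℕ∞) f U) (hx : x ≠ 0) (α β : ℝ) :
    ∑ i : Fin n, pd i (G1 α β f i) x =
      -BLv f x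
      + α * ((2 * LF f x + Pv f x) * NI x - 4 * (NI x * NI x) * (SS f x + HHv f x)
          + SS f x * (-2 * (n:ℝ) * (NI x * NI x) + 8 * (NI x * NI x)))
      + β * (LF f x * NI x - 4 * (NI x * NI x) * SS f x
          + f x * (-2 * (n:ℝ) * (NI x * NI x) + 8 * (NI x * NI x))) := by
  have key : ∀ i : Fin n, pd i (G1 α β f i) x =
      (-1 : ℝ) * pd i (pd i (LF f)) x
      + ((2*α*NI x + β*NI x) * pd i (pd i f) x
      + ((α*NI x) * (∑ j : Fin n, x j * pd i (pd i (pd j f)) x)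
      + ((-4*α*(NI x*NI x) - 4*β*(NI x*NI x)) * (x i * pd i f x)
      + ((-4*α*(NI x*NI x)) * (x i * ∑ j : Fin n, x j * pd i (pd j f) x)
      + ((-2*α*(NI x*NI x)*SS f x - 2*β*(NI x*NI x)*f x)
      + (8*α*(NI x*NI x*NI x)*SS f x + 8*β*(NI x*NI x*NI x)*f x) * (x i * x i)))))) := by
    intro i
    rw [pd_G1_self hf hx α β i, pd_SA_self hf hx i, pd_NI1_self hx i]
    simp only [SA, NI1]
    ring
  rw [Finset.sum_congr rfl fun i _ => key i]
  simp only [Finset.sum_add_distrib, ← Finset.mul_sum, Finset.sum_const, Finset.card_univ,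
    Fintype.card_fin, nsmul_eq_mul]
  rw [third_swap hf hx]
  simp only [BLv, Pv, HHv, SS, LF]
  have hNr : NN x * NI x = 1 := mul_inv_cancel₀ (NN_ne hx)
  simp only [NN] at hNr
  linear_combination (8*α*(NI x*NI x)*(∑ j : Fin n, x j * pd j f x)
    + 8*β*(NI x*NI x)*f x) * hNr

theorem sum_x_G1 {f : V → ℝ} {x : V} (hf : ContDiffOn ℝ (⊤ : ℕ∞) f U) (hx : x ≠ 0) (α β : ℝ) :
    ∑ i : Fin n, x i * G1 α β f i x =
      -Pv f x + α * ((SS f x + HHv f x) * NI x - 2 * SS f x * NI x)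
      + β * (SS f x * NI x - 2 * f x * NI x) := by
  have key : ∀ i : Fin n, x i * G1 α β f i x =
      (-1 : ℝ) * (x i * pd i (LF f) x)
      + ((α*NI x) * (x i * pd i f x)
      + ((α*NI x) * (x i * ∑ j : Fin n, x j * pd i (pd j f) x)
      + ((-2*α*(NI x*NI x)*SS f x - 2*β*(NI x*NI x)*f x) * (x i * x i)
      + (β*NI x) * (x i * pd i f x)))) := by
    intro i
    simp only [G1, SA, NI1]
    ring
  rw [Finset.sum_congr rfl fun i _ => key i]
  simp only [Finset.sum_add_distrib, ← Finset.mul_sum]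
  simp only [Pv, HHv, SS]
  have hNr : NN x * NI x = 1 := mul_inv_cancel₀ (NN_ne hx)
  simp only [NN] at hNr
  linear_combination (-2*α*NI x*(∑ j : Fin n, x j * pd j f x) - 2*β*NI x*f x) * hNr

end Stmt19Aux

theorem stmt_19 (n : ℕ) (hn : 2 ≤ n) (α β : ℝ)
    (f : EuclideanSpace ℝ (Fin n) → ℝ)
    (hf : ContDiffOn ℝ (⊤ : ℕ∞) f {(0 : EuclideanSpace ℝ (Fin n))}ᶜ) :
    ∀ x : EuclideanSpace ℝ (Fin n), x ≠ 0 →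
      TplusOp α β (TOp α β f) x =
        lap (lap f) x
        + (((n : ℝ) - 4) * α - 2 * β) * lap f x / ‖x‖ ^ 2
        + α * (4 - α) * (∑ j : Fin n, ∑ k : Fin n, x j * x k *
            fderiv ℝ (fderiv ℝ f) x (EuclideanSpace.single j 1) (EuclideanSpace.single k 1))
            / ‖x‖ ^ 4
        + (-((n : ℝ) - 3) * α ^ 2 + 2 * ((n : ℝ) - 2) * α + 4 * β) *
            (inner ℝ x (gradient f x) : ℝ) / ‖x‖ ^ 4
        + (β ^ 2 + 2 * ((n : ℝ) - 4) * β - ((n : ℝ) - 4) * α * β) * f x / ‖x‖ ^ 4 := by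
  intro x hx
  open Stmt19Aux in
  have hTOp : ∀ y : EuclideanSpace ℝ (Fin n), y ≠ 0 → TOp α β f y = GG α β f y :=
    TOp_eq hf α β
  have hlapG : lap (TOp α β f) x = ∑ i : Fin n, pd i (G1 α β f i) x := by
    rw [lap_congr hTOp hx, lap_eq_pdsum (GG_smooth hf α β) hx]
    exact Finset.sum_congr rfl fun i _ => pd_congr (fun y hy => pd_GG hf hy α β i) hx i
  have hgradG : (inner ℝ x (gradient (TOp α β f) x) : ℝ) = ∑ i : Fin n, x i * G1 α β f i x := by
    rw [inner_grad_eq]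
    refine Finset.sum_congr rfl fun i _ => ?_
    rw [pd_congr hTOp hx i, pd_GG hf hx α β i]
  have hTx : TOp α β f x = GG α β f x := hTOp x hx
  have hlap2 : lap (lap f) x = BLv f x := by
    rw [lap_congr (g := Stmt19Aux.LF f) (fun y hy => lap_eq_pdsum hf hy) hx,
      lap_eq_pdsum (LF_smooth hf) hx]
    rfl
  have hlapf : lap f x = LF f x := lap_eq_pdsum hf hx
  have hHess : (∑ j : Fin n, ∑ k : Fin n, x j * x k *
      fderiv ℝ (fderiv ℝ f) x (EuclideanSpace.single j 1) (EuclideanSpace.single k 1))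
      = HHv f x := by
    unfold HHv
    refine Finset.sum_congr rfl fun j _ => ?_
    rw [Finset.mul_sum]
    refine Finset.sum_congr rfl fun k _ => ?_
    rw [← pd_pd_eq hf hx j k]
    ring
  have hinner : (inner ℝ x (gradient f x) : ℝ) = SS f x := by
    rw [inner_grad_eq]; rfl
  have hn2 : ‖x‖ ^ 2 = NN x := (NN_eq x).symm
  have hn4 : ‖x‖ ^ 4 = NN x * NN x := by
    rw [show (4:ℕ) = 2*2 from rfl, pow_mul, ← NN_eq]; ring
  have h0 : NN x ≠ 0 := NN_ne hx
  unfold TplusOp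
  rw [hlapG, hgradG, hTx, hlap2, hlapf, hHess, hinner, hn2, hn4,
      sum_pd_G1 hf hx α β, sum_x_G1 hf hx α β]
  unfold GG
  simp only [NI]
  field_simp
  ring
end
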